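/- arXiv:2406.02712 — 6 statements merged into one kernel-verified Lean document; each statement's English description precedes it below -/
import Mathlib

section
/- Suppose Assumption 1 holds. Then an allocation (Y*_1,…,Y*_n) is Pareto optimal if and only if it is weakly Pareto optimal. -/
open MeasureTheory ProbabilityTheory Filter

noncomputable section

variable {Ω : Type*} [MeasurableSpace Ω] (μ : MeasureTheory.Measure Ω) [MeasureTheory.IsProbabilityMeasure μ]

/-- The measure is atomless: every set of positive measure has a subset of strictly
smaller positive measure. -/
def AtomlessMeasure : Prop :=
  ∀ s : Set Ω, MeasurableSet s → μ s ≠ 0 →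
    ∃ t ⊆ s, MeasurableSet t ∧ 0 < μ t ∧ μ t < μ s

/-- The space `𝒳 = L^∞` of essentially bounded random variables. -/
abbrev Xinf : Type _ := Lp ℝ ⊤ μ

variable {μ}

/-- Monotone utility functional on `L^∞`. -/
def UMonotone (U : Xinf μ → ℝ) : Prop :=
  ∀ Z₁ Z₂ : Xinf μ, Z₁ ≤ Z₂ → U Z₁ ≤ U Z₂

/-- Translation invariance. -/
def TranslationInvariant (U : Xinf μ → ℝ) : Prop :=
  ∀ (Z : Xinf μ) (c : ℝ), U (Z + Lp.const ⊤ μ c) = U Z + c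

/-- Law invariance. -/
def LawInvariant (U : Xinf μ → ℝ) : Prop :=
  ∀ Z₁ Z₂ : Xinf μ, IdentDistrib (Z₁ : Ω → ℝ) (Z₂ : Ω → ℝ) μ μ → U Z₁ = U Z₂

/-- Positive homogeneity. -/
def PositivelyHomogeneous (U : Xinf μ → ℝ) : Prop :=
  ∀ (Z : Xinf μ) (t : ℝ), 0 ≤ t → U (t • Z) = t * U Z

/-- Concave order `Z₁ ⪯_ccv Z₂`. -/
def ConcaveOrder (Z₁ Z₂ : Xinf μ) : Prop :=
  ∀ φ : ℝ → ℝ, ConcaveOn ℝ Set.univ φ →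
    ∫ ω, φ (Z₁ ω) ∂μ ≤ ∫ ω, φ (Z₂ ω) ∂μ

/-- Strict concave order `Z₁ ≺_ccv Z₂`. -/
def StrictConcaveOrder (Z₁ Z₂ : Xinf μ) : Prop :=
  ConcaveOrder Z₁ Z₂ ∧
    ∀ φ : ℝ → ℝ, StrictConcaveOn ℝ Set.univ φ →
      ∫ ω, φ (Z₁ ω) ∂μ < ∫ ω, φ (Z₂ ω) ∂μ

/-- Increasing concave order `Z₁ ⪯_icv Z₂`. -/
def IncConcaveOrder (Z₁ Z₂ : Xinf μ) : Prop :=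
  ∀ φ : ℝ → ℝ, Monotone φ → ConcaveOn ℝ Set.univ φ →
    ∫ ω, φ (Z₁ ω) ∂μ ≤ ∫ ω, φ (Z₂ ω) ∂μ

/-- Strict increasing concave order `Z₁ ≺_icv Z₂`. -/
def StrictIncConcaveOrder (Z₁ Z₂ : Xinf μ) : Prop :=
  IncConcaveOrder Z₁ Z₂ ∧
    ∀ φ : ℝ → ℝ, Monotone φ → StrictConcaveOn ℝ Set.univ φ →
      ∫ ω, φ (Z₁ ω) ∂μ < ∫ ω, φ (Z₂ ω) ∂μ

/-- Schur concavity. -/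
def SchurConcave (U : Xinf μ → ℝ) : Prop :=
  ∀ Z₁ Z₂ : Xinf μ, ConcaveOrder Z₁ Z₂ → U Z₁ ≤ U Z₂

/-- Strict Schur concavity. -/
def StrictSchurConcave (U : Xinf μ → ℝ) : Prop :=
  ∀ Z₁ Z₂ : Xinf μ, StrictConcaveOrder Z₁ Z₂ → U Z₁ < U Z₂

/-- S.S.D. preserving. -/
def SSDPreserving (U : Xinf μ → ℝ) : Prop :=
  ∀ Z₁ Z₂ : Xinf μ, IncConcaveOrder Z₁ Z₂ → U Z₁ ≤ U Z₂

/-- Strictly S.S.D. preserving. -/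
def StrictSSDPreserving (U : Xinf μ → ℝ) : Prop :=
  ∀ Z₁ Z₂ : Xinf μ, StrictIncConcaveOrder Z₁ Z₂ → U Z₁ < U Z₂

/-- A tuple of (pointwise defined) random variables is comonotone. -/
def ComonotoneFun {n : ℕ} (Z : Fin n → Ω → ℝ) : Prop :=
  ∀ i j ω₁ ω₂, 0 ≤ (Z i ω₁ - Z i ω₂) * (Z j ω₁ - Z j ω₂)

/-- A tuple of elements of `L^∞` is comonotone if some choice of representatives is. -/
def ComonotoneLp {n : ℕ} (Y : Fin n → Xinf μ) : Prop :=
  ∃ Z : Fin n → Ω → ℝ, (∀ i, (Y i : Ω → ℝ) =ᵐ[μ] Z i) ∧ ComonotoneFun Z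

/-- Assumption 1 of the paper. -/
def Assumption1 {n : ℕ} (U : Fin n → Xinf μ → ℝ) : Prop :=
  ∀ i (Z : Xinf μ),
    Continuous (fun c : ℝ => U i (Z + Lp.const ⊤ μ c)) ∧
    StrictMono (fun c : ℝ => U i (Z + Lp.const ⊤ μ c)) ∧
    Tendsto (fun c : ℝ => U i (Z + Lp.const ⊤ μ c)) atTop atTop

section Alloc

variable {n : ℕ} (U : Fin n → Xinf μ → ℝ) (X : Fin n → Xinf μ)

/-- Allocations of the aggregate endowment `∑ i, X i`. -/
def Alloc : Set (Fin n → Xinf μ) := {Y | ∑ i, Y i = ∑ i, X i}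

/-- Individually rational allocations. -/
def IRset : Set (Fin n → Xinf μ) :=
  {Y | Y ∈ Alloc X ∧ ∀ i, U i (X i) ≤ U i (Y i)}

/-- Pareto-optimal allocations. -/
def POset : Set (Fin n → Xinf μ) :=
  {Y | Y ∈ IRset U X ∧ ¬∃ Y' ∈ IRset U X,
    (∀ i, U i (Y i) ≤ U i (Y' i)) ∧ ∃ j, U j (Y j) < U j (Y' j)}

/-- Weakly Pareto-optimal allocations. -/
def WeakPOset : Set (Fin n → Xinf μ) :=
  {Y | Y ∈ IRset U X ∧ ¬∃ Y' ∈ IRset U X, ∀ i, U i (Y i) < U i (Y' i)}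

/-- Comonotone allocations. -/
def AllocC : Set (Fin n → Xinf μ) := {Y | Y ∈ Alloc X ∧ ComonotoneLp Y}

/-- Comonotone Pareto-optimal allocations. -/
def CPOset : Set (Fin n → Xinf μ) :=
  {Y | Y ∈ IRset U X ∧ ComonotoneLp Y ∧ ¬∃ Y' ∈ IRset U X, ComonotoneLp Y' ∧
    (∀ i, U i (Y i) ≤ U i (Y' i)) ∧ ∃ j, U j (Y j) < U j (Y' j)}

/-- Maximizers of the `λ`-weighted sum of utilities over IR allocations. -/
def SmaxSet (lam : Fin n → ℝ) : Set (Fin n → Xinf μ) :=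
  {Y | Y ∈ IRset U X ∧ ∀ Y' ∈ IRset U X,
    ∑ i, lam i * U i (Y' i) ≤ ∑ i, lam i * U i (Y i)}

/-- Maximizers of the `λ`-weighted sum of utilities over IR comonotone allocations. -/
def CSmaxSet (lam : Fin n → ℝ) : Set (Fin n → Xinf μ) :=
  {Y | Y ∈ IRset U X ∧ ComonotoneLp Y ∧ ∀ Y' ∈ IRset U X, ComonotoneLp Y' →
    ∑ i, lam i * U i (Y' i) ≤ ∑ i, lam i * U i (Y i)}

end Alloc



/-- A distortion function: a nondecreasing map of `[0,1]` into `[0,1]` with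
`T 0 = 0` and `T 1 = 1` (encoded as a function on `ℝ`; only values on `[0,1]` matter). -/
def IsDistortion (T : ℝ → ℝ) : Prop :=
  MonotoneOn T (Set.Icc 0 1) ∧ (∀ x ∈ Set.Icc (0:ℝ) 1, T x ∈ Set.Icc (0:ℝ) 1) ∧
    T 0 = 0 ∧ T 1 = 1

/-- A convex distortion function. -/
def IsConvexDistortion (T : ℝ → ℝ) : Prop :=
  IsDistortion T ∧ ConvexOn ℝ (Set.Icc 0 1) T

/-- A concave distortion function. -/
def IsConcaveDistortion (T : ℝ → ℝ) : Prop :=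
  IsDistortion T ∧ ConcaveOn ℝ (Set.Icc 0 1) T

/-- Sequential closedness under pointwise convergence. -/
def SeqClosedPointwise (𝒯 : Set (ℝ → ℝ)) : Prop :=
  ∀ (T : ℕ → ℝ → ℝ) (T' : ℝ → ℝ), (∀ k, T k ∈ 𝒯) →
    (∀ x, Tendsto (fun k => T k x) atTop (nhds (T' x))) → T' ∈ 𝒯

/-- The Choquet integral `∫ Z d(T ∘ μ)` of a random variable `Z` with respect to
the capacity `T ∘ μ`. -/
def choquet (μ : Measure Ω) (T : ℝ → ℝ) (Z : Ω → ℝ) : ℝ :=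
  (∫ t in Set.Ioi (0:ℝ), T (μ {ω | t < Z ω}).toReal) +
    ∫ t in Set.Iio (0:ℝ), (T (μ {ω | t < Z ω}).toReal - 1)

/-- Choquet integral of an element of `L^∞`. -/
def choquetLp (μ : Measure Ω) [IsProbabilityMeasure μ] (T : ℝ → ℝ) (Z : Lp ℝ ⊤ μ) : ℝ :=
  choquet μ T (Z : Ω → ℝ)

/-- The set `𝒢` of tuples of nondecreasing nonnegative functions on `ℝ₊` summing
to the identity. -/
def Gset (n : ℕ) : Set (Fin n → ℝ → ℝ) :=
  {g | (∀ i, MonotoneOn (g i) (Set.Ici 0)) ∧ (∀ i, ∀ x ≥ (0:ℝ), 0 ≤ g i x) ∧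
    ∀ x ≥ (0:ℝ), ∑ i, g i x = x}

/-- A pair of random variables is comonotone. -/
def ComonotonePair (Z S : Ω → ℝ) : Prop :=
  ∀ ω₁ ω₂, 0 ≤ (Z ω₁ - Z ω₂) * (S ω₁ - S ω₂)

def ComonotonePairLp (Z S : Lp ℝ ⊤ μ) : Prop :=
  ∃ Z' S' : Ω → ℝ, (Z : Ω → ℝ) =ᵐ[μ] Z' ∧ (S : Ω → ℝ) =ᵐ[μ] S' ∧ ComonotonePair Z' S'



/-- The essential infimum `s̲` of an element of `L^∞`. -/
def essInfS (S : Lp ℝ ⊤ μ) : ℝ := essInf (S : Ω → ℝ) μ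

/-- The tail probability `ℙ(S > s̲ + x)`. -/
def tailProbS (S : Lp ℝ ⊤ μ) (x : ℝ) : ℝ :=
  (μ {ω | essInfS S + x < S ω}).toReal

/-- The objective `(T_1,…,T_n) ↦ ∫_0^∞ max_i T_i(ℙ(S > s̲ + x)) dx`. -/
def JobjS {n : ℕ} (S : Lp ℝ ⊤ μ) (T : Fin n → ℝ → ℝ) : ℝ :=
  ∫ x in Set.Ioi (0:ℝ), ⨆ i, T i (tailProbS S x)

open Classical in
/-- The set `L_x` of agents attaining the maximum `max_j T_j(ℙ(S > s̲ + x))`. -/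
def Lset {n : ℕ} (S : Lp ℝ ⊤ μ) (T : Fin n → ℝ → ℝ) (x : ℝ) : Finset (Fin n) :=
  Finset.univ.filter (fun i => T i (tailProbS S x) = ⨆ j, T j (tailProbS S x))


/-- Under Assumption 1, an allocation is Pareto optimal if and only if it is
weakly Pareto optimal. -/
theorem pareto_iff_weakPareto
    (hatomless : AtomlessMeasure μ) {n : ℕ} (hn : 0 < n)
    (U : Fin n → Xinf μ → ℝ) (X : Fin n → Xinf μ)
    (hA1 : Assumption1 U) (Ystar : Fin n → Xinf μ) :
    Ystar ∈ POset U X ↔ Ystar ∈ WeakPOset U X := by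
  constructor
  · rintro ⟨hIR, hnd⟩
    exact ⟨hIR, fun ⟨Y', hY'IR, hstrict⟩ => hnd ⟨Y', hY'IR, fun i => (hstrict i).le,
      ⟨⟨0, hn⟩, hstrict _⟩⟩⟩
  · rintro ⟨hIR, hnw⟩
    refine ⟨hIR, ?_⟩
    rintro ⟨Y', hY'IR, hle, j, hj⟩
    obtain ⟨hcont, hmono, -⟩ := hA1 j (Y' j)
    have h0 : U j (Y' j + Lp.const ⊤ μ (0:ℝ)) = U j (Y' j) := by
      rw [map_zero, add_zero]
    have hopen : ∀ᶠ c in nhds (0:ℝ), U j (Ystar j) < U j (Y' j + Lp.const ⊤ μ c) :=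
      (hcont.continuousAt (x := (0:ℝ))).eventually_const_lt (by simpa [h0] using hj)
    obtain ⟨δ, hδpos, hδ⟩ := Metric.eventually_nhds_iff.mp hopen
    set ε : ℝ := δ / (2 * n) with hε
    have hεpos : 0 < ε := by positivity
    have hn1 : (1:ℝ) ≤ (n:ℝ) := by exact_mod_cast hn
    have hkey : ((n:ℝ) - 1) * ε < δ := by
      have h2 : (n:ℝ) * ε = δ / 2 := by
        rw [hε]; field_simp [(by exact_mod_cast hn.ne' : (n:ℝ) ≠ 0)]
      nlinarith
    have hnn : (0:ℝ) ≤ ((n:ℝ) - 1) * ε := by nlinarith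
    set c : Fin n → ℝ := fun i => if i = j then -(((n:ℝ) - 1) * ε) else ε with hc
    have hsumc : ∑ i, c i = 0 := by
      rw [← Finset.add_sum_erase Finset.univ c (Finset.mem_univ j)]
      have h1 : ∑ i ∈ Finset.univ.erase j, c i = ((n:ℝ) - 1) * ε := by
        rw [Finset.sum_congr rfl (fun i hi => by
          simp only [hc]; rw [if_neg (Finset.mem_erase.mp hi).1])]
        rw [Finset.sum_const, Finset.card_erase_of_mem (Finset.mem_univ j)]
        simp only [Finset.card_univ, Fintype.card_fin, nsmul_eq_mul]
        have : ((n - 1 : ℕ) : ℝ) = (n:ℝ) - 1 := by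
          rw [Nat.cast_sub hn]; simp
        rw [this]
      rw [h1, hc]; simp
    set Y'' : Fin n → Xinf μ := fun i => Y' i + Lp.const ⊤ μ (c i) with hY''
    have hsum : ∑ i, Y'' i = ∑ i, X i := by
      have : ∑ i, Y'' i = (∑ i, Y' i) + Lp.const ⊤ μ (∑ i, c i) := by
        rw [map_sum, Finset.sum_add_distrib]
      rw [this, hsumc, map_zero, add_zero]
      exact hY'IR.1
    -- strict improvement for i ≠ j
    have himp : ∀ i, i ≠ j → U i (Y' i) < U i (Y'' i) := by
      intro i hij
      obtain ⟨-, hmi, -⟩ := hA1 i (Y' i)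
      have := hmi hεpos
      have h0i : U i (Y' i + Lp.const ⊤ μ (0:ℝ)) = U i (Y' i) := by
        rw [map_zero, add_zero]
      simpa [hY'', hc, if_neg hij, h0i] using this
    have himpj : U j (Ystar j) < U j (Y'' j) := by
      have : dist (-(((n:ℝ) - 1) * ε)) 0 < δ := by
        rw [Real.dist_eq]
        simp only [sub_zero, abs_neg]
        rwa [abs_of_nonneg hnn]
      have := hδ this
      simpa [hY'', hc] using this
    exact hnw ⟨Y'', ⟨hsum, fun i => by
        by_cases hij : i = j
        · subst hij; exact (hIR.2 i).trans himpj.le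
        · exact (hY'IR.2 i).trans (himp i hij).le⟩,
      fun i => by
        by_cases hij : i = j
        · subst hij; exact himpj
        · exact lt_of_le_of_lt (hle i) (himp i hij)⟩


end
end

section
/- Suppose Assumption 1 holds and that U_i is monotone and concave for all i. Then the set of Pareto-optimal allocations equals the union over λ ∈ Λ of the sets 𝒮_λ of maximizers of the λ-weighted sum of utilities over IR allocations; that is, 𝒫𝒪 = ⋃_{λ∈Λ} 𝒮_λ. -/
open MeasureTheory ProbabilityTheory Filter

noncomputable section

variable {Ω : Type*} [MeasurableSpace Ω] (μ : MeasureTheory.Measure Ω) [MeasureTheory.IsProbabilityMeasure μ]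

variable {μ}

/-- Under Assumption 1, if each `U i` is monotone and concave, the Pareto-optimal
allocations are exactly the maximizers of some `λ`-weighted sum of utilities over IR
allocations, `λ ∈ Λ = ℝ₊ⁿ \ {0}`. -/
theorem PO_eq_union_weighted_maximizers
    (hatomless : AtomlessMeasure μ) {n : ℕ} (hn : 0 < n)
    (U : Fin n → Xinf μ → ℝ) (X : Fin n → Xinf μ)
    (hA1 : Assumption1 U)
    (hmono : ∀ i, UMonotone (U i)) (hconc : ∀ i, ConcaveOn ℝ Set.univ (U i)) :
    POset U X = ⋃ lam ∈ {l : Fin n → ℝ | (∀ i, 0 ≤ l i) ∧ l ≠ 0}, SmaxSet U X lam := by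
  classical
  ext Y
  simp only [POset, SmaxSet, Set.mem_setOf_eq, Set.mem_iUnion, exists_prop]
  constructor
  · rintro ⟨hIR, hPO⟩
    -- Separation argument in ℝⁿ
    set P : Set (Fin n → ℝ) := Set.univ.pi fun _ => Set.Ioi (0:ℝ) with hPdef
    set W : Set (Fin n → ℝ) :=
      {w | ∃ Y', Y' ∈ IRset U X ∧ ∀ i, w i ≤ U i (Y' i) - U i (Y i)} with hWdef
    have hPopen : IsOpen P := isOpen_set_pi Set.finite_univ (fun i _ => isOpen_Ioi)
    have hPconv : Convex ℝ P := convex_pi (fun i _ => convex_Ioi 0)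
    have hWconv : Convex ℝ W := by
      rintro w1 ⟨Y1, hY1, h1⟩ w2 ⟨Y2, hY2, h2⟩ p q hp hq hpq
      have hY1a : ∑ i, Y1 i = ∑ i, X i := hY1.1
      have hY2a : ∑ i, Y2 i = ∑ i, X i := hY2.1
      refine ⟨fun i => p • Y1 i + q • Y2 i, ⟨?_, ?_⟩, ?_⟩
      · show ∑ i, (p • Y1 i + q • Y2 i) = ∑ i, X i
        rw [Finset.sum_add_distrib, ← Finset.smul_sum, ← Finset.smul_sum, hY1a, hY2a,
          ← add_smul, hpq, one_smul]
      · intro i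
        have hcc := (hconc i).2 (Set.mem_univ (Y1 i)) (Set.mem_univ (Y2 i)) hp hq hpq
        simp only [smul_eq_mul] at hcc
        have e1 := mul_le_mul_of_nonneg_left (hY1.2 i) hp
        have e2 := mul_le_mul_of_nonneg_left (hY2.2 i) hq
        have hx : p * U i (X i) + q * U i (X i) = U i (X i) := by
          rw [← add_mul, hpq, one_mul]
        show U i (X i) ≤ U i (p • Y1 i + q • Y2 i)
        linarith
      · intro i
        have hcc := (hconc i).2 (Set.mem_univ (Y1 i)) (Set.mem_univ (Y2 i)) hp hq hpq
        simp only [smul_eq_mul] at hcc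
        have e1 := mul_le_mul_of_nonneg_left (h1 i) hp
        have e2 := mul_le_mul_of_nonneg_left (h2 i) hq
        have hx : p * U i (Y i) + q * U i (Y i) = U i (Y i) := by
          rw [← add_mul, hpq, one_mul]
        show (p • w1 + q • w2) i ≤ U i (p • Y1 i + q • Y2 i) - U i (Y i)
        simp only [Pi.add_apply, Pi.smul_apply, smul_eq_mul]
        linarith
    have hdisj : Disjoint P W := by
      rw [Set.disjoint_left]
      rintro w hwP ⟨Y', hY', h⟩
      refine hPO ⟨Y', hY', fun i => ?_, ⟨0, hn⟩, ?_⟩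
      · have hwi : 0 < w i := Set.mem_univ_pi.1 hwP i
        have := h i; linarith
      · have hwi : 0 < w (⟨0, hn⟩ : Fin n) := Set.mem_univ_pi.1 hwP _
        have := h (⟨0, hn⟩ : Fin n); linarith
    obtain ⟨f, u, hfP, hfW⟩ := geometric_hahn_banach_open hPconv hPopen hWconv hdisj
    have h0W : (0 : Fin n → ℝ) ∈ W := ⟨Y, hIR, fun i => by simp⟩
    have key : ∀ v : Fin n → ℝ, (∀ i, 0 ≤ v i) → f v ≤ u := by
      intro v hv
      have hcont : Continuous fun ε : ℝ => f v + ε * f 1 := by fun_prop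
      have hlim : Tendsto (fun ε : ℝ => f v + ε * f 1) (nhdsWithin 0 (Set.Ioi 0))
          (nhds (f v + 0 * f 1)) := (hcont.tendsto 0).mono_left nhdsWithin_le_nhds
      have hev : ∀ᶠ ε in nhdsWithin (0:ℝ) (Set.Ioi 0), f v + ε * f 1 ≤ u := by
        filter_upwards [self_mem_nhdsWithin] with ε hε
        have hmem : v + ε • (1 : Fin n → ℝ) ∈ P := by
          refine Set.mem_univ_pi.2 fun i => ?_
          have : (0:ℝ) < v i + ε * 1 := by
            have := hv i; have : (0:ℝ) < ε := hε; nlinarith [hv i]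
          simpa using this
        have h1 := hfP _ hmem
        have h2 : f (v + ε • (1 : Fin n → ℝ)) = f v + ε * f 1 := by
          rw [map_add, f.map_smul, smul_eq_mul]
        rw [h2] at h1
        exact h1.le
      have := le_of_tendsto hlim hev
      simpa using this
    have hu0 : u = 0 := by
      have h1 : u ≤ f 0 := hfW 0 h0W
      have h2 : f 0 ≤ u := key 0 (fun _ => le_refl 0)
      simp only [map_zero] at h1 h2
      linarith
    have rep : ∀ v : Fin n → ℝ,
        f v = ∑ i, v i * f (fun j => if i = j then (1:ℝ) else 0) := by
      intro v
      conv_lhs => rw [pi_eq_sum_univ v]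
      rw [map_sum]
      simp [smul_eq_mul]
    have hfe : ∀ i, f (fun j => if i = j then (1:ℝ) else 0) ≤ 0 := by
      intro i
      have := key (fun j => if i = j then (1:ℝ) else 0) (fun j => by by_cases h : i = j <;> simp [h])
      rwa [hu0] at this
    refine ⟨fun i => -(f (fun j => if i = j then (1:ℝ) else 0)), ⟨fun i => ?_, ?_⟩,
      hIR, fun Y' hY' => ?_⟩
    · have := hfe i; dsimp only; linarith
    · intro hzero
      have hz : ∀ i, f (fun j => if i = j then (1:ℝ) else 0) = 0 := by
        intro i
        have := congrFun hzero i
        simpa [neg_eq_zero] using this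
      have h1P : (fun _ => (1:ℝ)) ∈ P := Set.mem_univ_pi.2 fun i => by norm_num
      have := hfP _ h1P
      rw [rep] at this
      simp [hz, hu0] at this
    · have hw : (fun i => U i (Y' i) - U i (Y i)) ∈ W := ⟨Y', hY', fun i => le_refl _⟩
      have hle := hfW _ hw
      rw [rep, hu0] at hle
      have hrw : ∀ i ∈ Finset.univ,
          (U i (Y' i) - U i (Y i)) * f (fun j => if i = j then (1:ℝ) else 0)
            = (-(f (fun j => if i = j then (1:ℝ) else 0))) * U i (Y i)
              - (-(f (fun j => if i = j then (1:ℝ) else 0))) * U i (Y' i) := by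
        intro i _; ring
      rw [Finset.sum_congr rfl hrw, Finset.sum_sub_distrib] at hle
      linarith
  · rintro ⟨lam, ⟨hlamnn, hlamne⟩, hIRY, hmax⟩
    refine ⟨hIRY, ?_⟩
    rintro ⟨Y', hY', hle, j, hj⟩
    by_cases hlj : 0 < lam j
    · have hstrict : ∑ i, lam i * U i (Y i) < ∑ i, lam i * U i (Y' i) :=
        Finset.sum_lt_sum (fun i _ => mul_le_mul_of_nonneg_left (hle i) (hlamnn i))
          ⟨j, Finset.mem_univ j, (mul_lt_mul_iff_right₀ hlj).2 hj⟩
      exact absurd (hmax Y' hY') (not_le.2 hstrict)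
    · have hlj0 : lam j = 0 := le_antisymm (not_lt.1 hlj) (hlamnn j)
      obtain ⟨k, hk⟩ : ∃ k, lam k ≠ 0 := Function.ne_iff.1 hlamne
      have hlk : 0 < lam k := (hlamnn k).lt_of_ne (Ne.symm hk)
      have hkj : k ≠ j := fun h => hk (h ▸ hlj0)
      obtain ⟨hc, -, -⟩ := hA1 j (Y' j)
      have h0 : U j (Y' j + Lp.const ⊤ μ 0) = U j (Y' j) := by
        rw [map_zero, add_zero]
      have hgt : U j (Y j) < (fun c => U j (Y' j + Lp.const ⊤ μ c)) 0 := by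
        simpa [h0] using hj
      have hev := (hc.tendsto 0).eventually (eventually_gt_nhds hgt)
      obtain ⟨ε, hε, hball⟩ := Metric.eventually_nhds_iff.1 hev
      set δ := ε/2 with hδdef
      have hδpos : 0 < δ := by positivity
      have hjgt : U j (Y j) < U j (Y' j + Lp.const ⊤ μ (-δ)) := by
        have hd : dist (-δ) (0:ℝ) < ε := by
          rw [Real.dist_eq, sub_zero, abs_neg, abs_of_pos hδpos]
          linarith
        exact hball hd
      set d : Fin n → ℝ := Pi.single j (-δ) + Pi.single k δ with hddef
      set Y'' : Fin n → Xinf μ := fun i => Y' i + Lp.const ⊤ μ (d i) with hY''def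
      have hdj : d j = -δ := by
        simp [hddef, Pi.single_apply, Ne.symm hkj]
      have hdk : d k = δ := by
        simp [hddef, Pi.single_apply, hkj]
      have hdo : ∀ i, i ≠ j → i ≠ k → d i = 0 := by
        intro i hij hik
        simp [hddef, Pi.single_apply, hij, hik]
      have hsum0 : ∑ i, d i = 0 := by
        simp [hddef, Finset.sum_add_distrib, Finset.sum_pi_single']
      have hY'a : ∑ i, Y' i = ∑ i, X i := hY'.1
      have halloc : ∑ i, Y'' i = ∑ i, X i := by
        have h1 : ∑ i, Y'' i = ∑ i, Y' i + ∑ i, Lp.const ⊤ μ (d i) := by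
          simp [hY''def, Finset.sum_add_distrib]
        rw [h1, ← map_sum, hsum0, map_zero, add_zero, hY'a]
      have hYj'' : Y'' j = Y' j + Lp.const ⊤ μ (-δ) := by rw [hY''def]; simp [hdj]
      have hYk'' : Y'' k = Y' k + Lp.const ⊤ μ δ := by rw [hY''def]; simp [hdk]
      have hYo'' : ∀ i, i ≠ j → i ≠ k → Y'' i = Y' i := by
        intro i hij hik
        rw [hY''def]
        simp [hdo i hij hik, map_zero]
      obtain ⟨-, hmk, -⟩ := hA1 k (Y' k)
      have hkgt : U k (Y' k) < U k (Y'' k) := by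
        have := hmk hδpos
        simp only at this
        rw [map_zero, add_zero] at this
        rwa [hYk'']
      have hUle : ∀ i, U i (Y i) ≤ U i (Y'' i) := by
        intro i
        by_cases hij : i = j
        · subst hij; rw [hYj'']; exact hjgt.le
        · by_cases hik : i = k
          · subst hik; exact (hle i).trans hkgt.le
          · rw [hYo'' i hij hik]; exact hle i
      have hIR'' : Y'' ∈ IRset U X := by
        refine ⟨halloc, fun i => le_trans (hIRY.2 i) (hUle i)⟩
      have hstrict : ∑ i, lam i * U i (Y i) < ∑ i, lam i * U i (Y'' i) :=
        Finset.sum_lt_sum (fun i _ => mul_le_mul_of_nonneg_left (hUle i) (hlamnn i))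
          ⟨k, Finset.mem_univ k, (mul_lt_mul_iff_right₀ hlk).2 ((hle k).trans_lt hkgt)⟩
      exact absurd (hmax Y'' hIR'') (not_le.2 hstrict)

end
end

section
/- Suppose Assumption 1 holds and that U_i is monotone and concave for all i. Then the set of comonotone Pareto-optimal allocations equals the union over λ ∈ Λ of the sets 𝒞𝒮_λ of maximizers of the λ-weighted sum of utilities over IR comonotone allocations; that is, 𝒞𝒫𝒪 = ⋃_{λ∈Λ} 𝒞𝒮_λ. -/
open MeasureTheory ProbabilityTheory Filter

noncomputable section

variable {Ω : Type*} [MeasurableSpace Ω] (μ : MeasureTheory.Measure Ω) [MeasureTheory.IsProbabilityMeasure μ]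

variable {μ}

set_option linter.unusedSectionVars false in

private lemma lpCoeFn_sum {ι : Type*} (s : Finset ι) (f : ι → Xinf μ) :
    ⇑(∑ i ∈ s, f i) =ᵐ[μ] fun ω => ∑ i ∈ s, (f i : Ω → ℝ) ω := by
  classical
  induction s using Finset.induction_on with
  | empty => simp only [Finset.sum_empty]; exact Lp.coeFn_zero _ _ _
  | @insert a s ha ih =>
    rw [Finset.sum_insert ha]
    filter_upwards [Lp.coeFn_add (f a) (∑ i ∈ s, f i), ih] with ω h1 h2
    rw [h1, Pi.add_apply, h2, Finset.sum_insert ha]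

private lemma cross_nonneg {a b s : ℝ} (ha : a^2 ≤ a*s) (hb : b^2 ≤ b*s) : 0 ≤ a*b := by
  nlinarith [sq_nonneg a, sq_nonneg b, sq_nonneg (a-b), sq_nonneg (a+b)]

private lemma como_sq {n : ℕ} {Z : Fin n → Ω → ℝ} (h : ComonotoneFun Z) (i : Fin n) (ω₁ ω₂ : Ω) :
    (Z i ω₁ - Z i ω₂)^2 ≤ (Z i ω₁ - Z i ω₂) * (∑ j, Z j ω₁ - ∑ j, Z j ω₂) := by
  have hs : (∑ j, Z j ω₁) - ∑ j, Z j ω₂ = ∑ j, (Z j ω₁ - Z j ω₂) := by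
    rw [Finset.sum_sub_distrib]
  rw [hs, Finset.mul_sum, sq]
  exact Finset.single_le_sum (f := fun j => (Z i ω₁ - Z i ω₂) * (Z j ω₁ - Z j ω₂))
    (fun j _ => h i j ω₁ ω₂) (Finset.mem_univ i)

private lemma comonotoneLp_convex {n : ℕ} {Y Y' : Fin n → Xinf μ} (hY : ComonotoneLp Y)
    (hY' : ComonotoneLp Y') (hsum : ∑ i, Y i = ∑ i, Y' i) {a b : ℝ} (ha : 0 ≤ a) (hb : 0 ≤ b) :
    ComonotoneLp (fun i => a • Y i + b • Y' i) := by
  classical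
  obtain ⟨Z, hZ, hZc⟩ := hY
  obtain ⟨Z', hZ', hZc'⟩ := hY'
  have hae : ∀ᵐ ω ∂μ, ∑ i, Z i ω = ∑ i, Z' i ω := by
    have hZa : ∀ᵐ ω ∂μ, ∀ i, (Y i : Ω → ℝ) ω = Z i ω := (ae_all_iff).2 hZ
    have hZ'a : ∀ᵐ ω ∂μ, ∀ i, (Y' i : Ω → ℝ) ω = Z' i ω := (ae_all_iff).2 hZ'
    have heq : ⇑(∑ i, Y i) =ᵐ[μ] ⇑(∑ i, Y' i) := by rw [hsum]
    filter_upwards [lpCoeFn_sum Finset.univ Y, lpCoeFn_sum Finset.univ Y', heq, hZa, hZ'a]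
      with ω e1 e2 e3 e4 e5
    calc ∑ i, Z i ω = ∑ i, (Y i : Ω → ℝ) ω := by
          exact Finset.sum_congr rfl fun i _ => (e4 i).symm
      _ = ∑ i, (Y' i : Ω → ℝ) ω := by rw [← e1, ← e2, e3]
      _ = ∑ i, Z' i ω := Finset.sum_congr rfl fun i _ => e5 i
  set G : Set Ω := {ω | ∑ i, Z i ω = ∑ i, Z' i ω} with hGdef
  have hGne : G.Nonempty := by
    by_contra h
    rw [Set.not_nonempty_iff_eq_empty] at h
    have : μ Gᶜ = 0 := by rwa [ae_iff] at hae
    rw [h, Set.compl_empty] at this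
    simp at this
  obtain ⟨ω0, hω0⟩ := hGne
  set V : Fin n → Ω → ℝ := fun i ω => a * Z i ω + b * Z' i ω with hVdef
  refine ⟨fun i ω => if ω ∈ G then V i ω else V i ω0, ?_, ?_⟩
  · intro i
    filter_upwards [Lp.coeFn_add (a • Y i) (b • Y' i), Lp.coeFn_smul a (Y i),
      Lp.coeFn_smul b (Y' i), hZ i, hZ' i, hae] with ω e1 e2 e3 e4 e5 e6
    have hωG : ω ∈ G := e6
    simp only [hωG, if_pos]
    rw [e1, Pi.add_apply, e2, e3, Pi.smul_apply, Pi.smul_apply, smul_eq_mul, smul_eq_mul, e4, e5]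
  · have key : ∀ i j σ τ, σ ∈ G → τ ∈ G → 0 ≤ (V i σ - V i τ) * (V j σ - V j τ) := by
      intro i j σ τ hσ hτ
      have hss : (∑ k, Z' k σ) - ∑ k, Z' k τ = (∑ k, Z k σ) - ∑ k, Z k τ := by
        rw [hσ, hτ]
      have hAi := como_sq hZc i σ τ
      have hAj := como_sq hZc j σ τ
      have hBi := como_sq hZc' i σ τ
      have hBj := como_sq hZc' j σ τ
      rw [hss] at hBi hBj
      have c1 : 0 ≤ (Z i σ - Z i τ) * (Z j σ - Z j τ) := hZc i j σ τ
      have c2 : 0 ≤ (Z' i σ - Z' i τ) * (Z' j σ - Z' j τ) := hZc' i j σ τ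
      have c3 : 0 ≤ (Z i σ - Z i τ) * (Z' j σ - Z' j τ) := cross_nonneg hAi hBj
      have c4 : 0 ≤ (Z' i σ - Z' i τ) * (Z j σ - Z j τ) := cross_nonneg hBi hAj
      have hexp : (V i σ - V i τ) * (V j σ - V j τ) =
          a^2 * ((Z i σ - Z i τ) * (Z j σ - Z j τ))
          + a*b * ((Z i σ - Z i τ) * (Z' j σ - Z' j τ))
          + a*b * ((Z' i σ - Z' i τ) * (Z j σ - Z j τ))
          + b^2 * ((Z' i σ - Z' i τ) * (Z' j σ - Z' j τ)) := by
        simp only [hVdef]; ring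
      rw [hexp]
      have hab : 0 ≤ a * b := mul_nonneg ha hb
      positivity
    intro i j ω₁ ω₂
    have m1 : (if ω₁ ∈ G then ω₁ else ω0) ∈ G := by split_ifs with h; exacts [h, hω0]
    have m2 : (if ω₂ ∈ G then ω₂ else ω0) ∈ G := by split_ifs with h; exacts [h, hω0]
    have e1 : ∀ k ω, (if ω ∈ G then V k ω else V k ω0) = V k (if ω ∈ G then ω else ω0) := by
      intro k ω; split_ifs <;> rfl
    simp only [e1]
    exact key i j _ _ m1 m2
set_option linter.unusedSectionVars false in

theorem CPO_eq_union_weighted_maximizers'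
    {n : ℕ} (hn : 0 < n)
    (U : Fin n → Xinf μ → ℝ) (X : Fin n → Xinf μ)
    (hA1 : Assumption1 U)
    (hconc : ∀ i, ConcaveOn ℝ Set.univ (U i)) :
    CPOset U X = ⋃ lam ∈ {l : Fin n → ℝ | (∀ i, 0 ≤ l i) ∧ l ≠ 0}, CSmaxSet U X lam := by
  classical
  apply Set.Subset.antisymm
  · -- CPO ⊆ union
    intro Y hY
    obtain ⟨hYIR, hYcom, hYopt⟩ := hY
    set ustar : Fin n → ℝ := fun i => U i (Y i) with hustar
    -- the utility possibility set
    set B : Set (Fin n → ℝ) :=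
      {u | ∃ Y', Y' ∈ IRset U X ∧ ComonotoneLp Y' ∧ ∀ i, u i ≤ U i (Y' i)} with hBdef
    have hBconv : Convex ℝ B := by
      rintro u ⟨Y1, hY1IR, hY1c, hY1b⟩ v ⟨Y2, hY2IR, hY2c, hY2b⟩ a b ha hb hab
      refine ⟨fun i => a • Y1 i + b • Y2 i, ⟨?_, ?_⟩, ?_, ?_⟩
      · -- allocation
        show ∑ i, (a • Y1 i + b • Y2 i) = ∑ i, X i
        rw [Finset.sum_add_distrib, ← Finset.smul_sum, ← Finset.smul_sum,
          hY1IR.1, hY2IR.1, ← add_smul, hab, one_smul]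
      · -- IR
        intro i
        have h1 := (hconc i).2 (Set.mem_univ (Y1 i)) (Set.mem_univ (Y2 i)) ha hb hab
        have h2 : a * U i (X i) + b * U i (X i) ≤ a * U i (Y1 i) + b * U i (Y2 i) := by
          have := hY1IR.2 i; have := hY2IR.2 i
          have g1 : a * U i (X i) ≤ a * U i (Y1 i) :=
            mul_le_mul_of_nonneg_left (hY1IR.2 i) ha
          have g2 : b * U i (X i) ≤ b * U i (Y2 i) :=
            mul_le_mul_of_nonneg_left (hY2IR.2 i) hb
          linarith
        have h3 : a * U i (X i) + b * U i (X i) = U i (X i) := by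
          rw [← add_mul, hab, one_mul]
        simp only [smul_eq_mul] at h1
        linarith
      · -- comonotone
        exact comonotoneLp_convex hY1c hY2c (by rw [hY1IR.1, hY2IR.1]) ha hb
      · -- bound
        intro i
        have h1 := (hconc i).2 (Set.mem_univ (Y1 i)) (Set.mem_univ (Y2 i)) ha hb hab
        simp only [smul_eq_mul] at h1
        have g1 : a * u i ≤ a * U i (Y1 i) := mul_le_mul_of_nonneg_left (hY1b i) ha
        have g2 : b * v i ≤ b * U i (Y2 i) := mul_le_mul_of_nonneg_left (hY2b i) hb
        simp only [Pi.add_apply, Pi.smul_apply, smul_eq_mul]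
        linarith
    set s : Set (Fin n → ℝ) := Set.univ.pi (fun i => Set.Ioi (ustar i)) with hsdef
    have hsopen : IsOpen s := isOpen_set_pi Set.finite_univ fun i _ => isOpen_Ioi
    have hsconv : Convex ℝ s := convex_pi fun i _ => convex_Ioi _
    have hdisj : Disjoint s B := by
      rw [Set.disjoint_left]
      rintro x hxs ⟨Y', hY'IR, hY'c, hY'b⟩
      refine hYopt ⟨Y', hY'IR, hY'c, fun i => ?_, ⟨⟨0, hn⟩, ?_⟩⟩
      · exact le_of_lt (lt_of_lt_of_le (hxs i (Set.mem_univ i)) (hY'b i))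
      · exact lt_of_lt_of_le (hxs ⟨0, hn⟩ (Set.mem_univ _)) (hY'b ⟨0, hn⟩)
    obtain ⟨f, u, hfs, hfB⟩ := geometric_hahn_banach_open hsconv hsopen hBconv hdisj
    set e : Fin n → (Fin n → ℝ) := fun i j => if i = j then 1 else 0 with hedef
    have hrep : ∀ x : Fin n → ℝ, f x = ∑ i, x i * f (e i) := by
      intro x
      have := LinearMap.pi_apply_eq_sum_univ (f.toLinearMap) x
      simpa [smul_eq_mul, hedef] using this
    have hmem1 : ustar + (fun _ => (1:ℝ)) ∈ s := by
      intro i _; simp [hsdef]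
    have hfu1 : f (ustar + fun _ => (1:ℝ)) < u := hfs _ hmem1
    have hustarB : ustar ∈ B := ⟨Y, hYIR, hYcom, fun i => le_refl _⟩
    have hfei : ∀ i, f (e i) ≤ 0 := by
      intro i
      by_contra hpos
      push_neg at hpos
      set t : ℝ := (u - f (ustar + fun _ => (1:ℝ))) / f (e i) with htdef
      have ht : 0 < t := div_pos (by linarith) hpos
      have hmem : (ustar + (fun _ => (1:ℝ)) + t • e i) ∈ s := by
        intro j _
        simp only [Pi.add_apply, Pi.smul_apply, hedef, smul_eq_mul, Set.mem_Ioi]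
        have : 0 ≤ t * (if i = j then (1:ℝ) else 0) :=
          mul_nonneg ht.le (by split_ifs <;> norm_num)
        linarith
      have hlt := hfs _ hmem
      rw [map_add, _root_.map_smul, smul_eq_mul, htdef, div_mul_cancel₀ _ (ne_of_gt hpos)] at hlt
      linarith
    set lam : Fin n → ℝ := fun i => -(f (e i)) with hlam
    have hlamnn : ∀ i, 0 ≤ lam i := fun i => neg_nonneg.2 (hfei i)
    have hkey : ∀ w : Fin n → ℝ, ∑ i, lam i * w i = -(f w) := by
      intro w
      rw [hrep w, ← Finset.sum_neg_distrib]
      exact Finset.sum_congr rfl fun i _ => by simp [hlam]; ring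
    have hlamne : lam ≠ 0 := by
      intro h0
      have hf0 : ∀ x, f x = 0 := by
        intro x
        rw [hrep x]
        apply Finset.sum_eq_zero
        intro i _
        have : lam i = 0 := congrFun h0 i
        have : f (e i) = 0 := by simpa [hlam] using this
        rw [this, mul_zero]
      have h1 : (0:ℝ) < u := by have := hfu1; rw [hf0] at this; exact this
      have h2 : u ≤ 0 := by have := hfB _ hustarB; rw [hf0] at this; exact this
      linarith
    have hfustar : f ustar ≤ u := by
      by_contra h
      push_neg at h
      set ε : ℝ := (f ustar - u) / (|f (fun _ => (1:ℝ))| + 1) with hε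
      have habs : 0 ≤ |f (fun _ => (1:ℝ))| := abs_nonneg _
      have hεpos : 0 < ε := div_pos (by linarith) (by linarith)
      have hmem : (ustar + ε • (fun _ => (1:ℝ))) ∈ s := by
        intro j _
        simp only [Pi.add_apply, Pi.smul_apply, smul_eq_mul, mul_one, Set.mem_Ioi]
        linarith
      have hlt := hfs _ hmem
      rw [map_add, _root_.map_smul, smul_eq_mul] at hlt
      have hmul : ε * (|f (fun _ => (1:ℝ))| + 1) = f ustar - u :=
        div_mul_cancel₀ _ (by linarith)
      have hbd : ε * -(|f (fun _ => (1:ℝ))|) ≤ ε * f (fun _ => (1:ℝ)) :=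
        mul_le_mul_of_nonneg_left (neg_abs_le _) hεpos.le
      nlinarith
    refine Set.mem_biUnion (show lam ∈ {l : Fin n → ℝ | (∀ i, 0 ≤ l i) ∧ l ≠ 0} from
      ⟨hlamnn, hlamne⟩) ?_
    refine ⟨hYIR, hYcom, ?_⟩
    intro Y' hY'IR hY'c
    have hu'B : (fun i => U i (Y' i)) ∈ B := ⟨Y', hY'IR, hY'c, fun i => le_refl _⟩
    have h1 : u ≤ f (fun i => U i (Y' i)) := hfB _ hu'B
    have h2 := hkey (fun i => U i (Y' i))
    have h3 := hkey ustar
    simp only [hustar] at h3 ⊢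
    rw [show (∑ i, lam i * U i (Y' i)) = -(f fun i => U i (Y' i)) from h2, h3]
    linarith
  · -- union ⊆ CPO
    intro Y hY
    simp only [Set.mem_iUnion] at hY
    obtain ⟨lam, ⟨hnn, hne⟩, hYIR, hYcom, hmax⟩ := hY
    obtain ⟨k, hk⟩ : ∃ k, 0 < lam k := by
      by_contra h
      push_neg at h
      exact hne (funext fun i => le_antisymm (h i) (hnn i))
    refine ⟨hYIR, hYcom, ?_⟩
    rintro ⟨Y', hY'IR, hY'c, hle, j, hj⟩
    by_cases hlj : 0 < lam j
    · have hlt : ∑ i, lam i * U i (Y i) < ∑ i, lam i * U i (Y' i) :=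
        Finset.sum_lt_sum (fun i _ => mul_le_mul_of_nonneg_left (hle i) (hnn i))
          ⟨j, Finset.mem_univ j, mul_lt_mul_of_pos_left hj hlj⟩
      exact absurd (hmax Y' hY'IR hY'c) (not_le.2 hlt)
    · have hlj0 : lam j = 0 := le_antisymm (not_lt.1 hlj) (hnn j)
      have hjk : j ≠ k := by intro h; rw [h] at hlj0; exact hk.ne' hlj0
      -- find c0 > 0 with U j (Y' j + const (-c0)) > U j (X j)
      have hcont := (hA1 j (Y' j)).1
      have hg0 : U j (Y' j + Lp.const ⊤ μ (0:ℝ)) = U j (Y' j) := by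
        rw [show Lp.const ⊤ μ (0:ℝ) = 0 from map_zero _, add_zero]
      have h0mem : (0:ℝ) ∈ (fun c => U j (Y' j + Lp.const ⊤ μ c)) ⁻¹' Set.Ioi (U j (X j)) := by
        simp only [Set.mem_preimage, Set.mem_Ioi, hg0]
        exact lt_of_le_of_lt (hYIR.2 j) hj
      have hopen := hcont.isOpen_preimage (Set.Ioi (U j (X j))) isOpen_Ioi
      obtain ⟨δ, hδ, hball⟩ := Metric.isOpen_iff.1 hopen 0 h0mem
      set c0 : ℝ := δ / 2 with hc0
      have hc0pos : 0 < c0 := by positivity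
      have hjgood : U j (X j) < U j (Y' j + Lp.const ⊤ μ (-c0)) := by
        have : (-c0) ∈ Metric.ball (0:ℝ) δ := by
          simp only [Metric.mem_ball, dist_zero_right, norm_neg, Real.norm_eq_abs,
            abs_of_pos hc0pos]
          linarith
        exact hball this
      set d : Fin n → ℝ := fun i => if i = k then c0 else if i = j then -c0 else 0 with hd
      set Y'' : Fin n → Xinf μ := fun i => Y' i + Lp.const ⊤ μ (d i) with hY''
      have hdsum : ∑ i, d i = 0 := by
        have : ∀ i, d i = (if i = k then c0 else 0) + (if i = j then -c0 else 0) := by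
          intro i
          by_cases hik : i = k
          · subst hik; simp [hd, hjk.symm]
          · by_cases hij : i = j
            · subst hij; simp [hd, hik]
            · simp [hd, hik, hij]
        rw [Finset.sum_congr rfl fun i _ => this i, Finset.sum_add_distrib]
        simp [Finset.sum_ite_eq']
      have hY''alloc : ∑ i, Y'' i = ∑ i, X i := by
        simp only [hY'']
        rw [Finset.sum_add_distrib, hY'IR.1, show (∑ i, Lp.const ⊤ μ (d i)) =
          Lp.const ⊤ μ (∑ i, d i) from (map_sum _ _ _).symm, hdsum,
          show Lp.const ⊤ μ (0:ℝ) = 0 from map_zero _, add_zero]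
      have hY''j : Y'' j = Y' j + Lp.const ⊤ μ (-c0) := by
        simp [hY'', hd, hjk]
      have hY''k : Y'' k = Y' k + Lp.const ⊤ μ c0 := by
        simp [hY'', hd]
      have hY''other : ∀ i, i ≠ j → i ≠ k → Y'' i = Y' i := by
        intro i hij hik
        simp only [hY'', hd, if_neg hik, if_neg hij, show Lp.const ⊤ μ (0:ℝ) = 0 from map_zero _,
          add_zero]
      have hkgain : U k (Y' k) < U k (Y'' k) := by
        rw [hY''k]
        have hsm := (hA1 k (Y' k)).2.1
        have h2 : U k (Y' k + Lp.const ⊤ μ (0:ℝ)) < U k (Y' k + Lp.const ⊤ μ c0) :=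
          hsm hc0pos
        rwa [show Lp.const ⊤ μ (0:ℝ) = 0 from map_zero _, add_zero] at h2
      have hY''IR : Y'' ∈ IRset U X := by
        refine ⟨hY''alloc, fun i => ?_⟩
        by_cases hik : i = k
        · subst hik
          exact le_trans (hY'IR.2 i) hkgain.le
        · by_cases hij : i = j
          · subst hij
            rw [hY''j]; exact hjgood.le
          · rw [hY''other i hij hik]; exact hY'IR.2 i
      have hY''com : ComonotoneLp Y'' := by
        obtain ⟨Z', hZ'ae, hZ'c⟩ := hY'c
        refine ⟨fun i ω => Z' i ω + d i, fun i => ?_, fun i j' ω₁ ω₂ => ?_⟩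
        · filter_upwards [Lp.coeFn_add (Y' i) (Lp.const ⊤ μ (d i)),
            Lp.coeFn_const (μ := μ) ⊤ (d i)  , hZ'ae i] with ω e1 e2 e3
          rw [hY'']
          simp only []
          rw [e1, Pi.add_apply, e2, e3]
          rfl
        · have : (Z' i ω₁ + d i - (Z' i ω₂ + d i)) * (Z' j' ω₁ + d j' - (Z' j' ω₂ + d j')) =
            (Z' i ω₁ - Z' i ω₂) * (Z' j' ω₁ - Z' j' ω₂) := by ring
          rw [this]; exact hZ'c i j' ω₁ ω₂
      have hlt : ∑ i, lam i * U i (Y i) < ∑ i, lam i * U i (Y'' i) := by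
        refine Finset.sum_lt_sum (fun i _ => ?_) ⟨k, Finset.mem_univ k, ?_⟩
        · by_cases hik : i = k
          · subst hik
            exact mul_le_mul_of_nonneg_left (le_trans (hle i) hkgain.le) (hnn i)
          · by_cases hij : i = j
            · subst hij; rw [hlj0]; simp
            · rw [hY''other i hij hik]
              exact mul_le_mul_of_nonneg_left (hle i) (hnn i)
        · exact mul_lt_mul_of_pos_left (lt_of_le_of_lt (hle k) hkgain) hk
      exact absurd (hmax Y'' hY''IR hY''com) (not_le.2 hlt)

/-- Under Assumption 1, if each `U i` is monotone and concave, the comonotone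
Pareto-optimal allocations are exactly the maximizers of some `λ`-weighted sum of utilities
over IR comonotone allocations, `λ ∈ Λ = ℝ₊ⁿ \ {0}`. -/
theorem CPO_eq_union_weighted_maximizers
    (hatomless : AtomlessMeasure μ) {n : ℕ} (hn : 0 < n)
    (U : Fin n → Xinf μ → ℝ) (X : Fin n → Xinf μ)
    (hA1 : Assumption1 U)
    (hmono : ∀ i, UMonotone (U i)) (hconc : ∀ i, ConcaveOn ℝ Set.univ (U i)) :
    CPOset U X = ⋃ lam ∈ {l : Fin n → ℝ | (∀ i, 0 ≤ l i) ∧ l ≠ 0}, CSmaxSet U X lam := by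
  exact CPO_eq_union_weighted_maximizers' hn U X hA1 hconc

end
end

section
/- Suppose each U_i is Schur concave. Then for every allocation (Y_1,…,Y_n) there exists a comonotone allocation (Ỹ_1,…,Ỹ_n) such that U_i(Y_i) ≤ U_i(Ỹ_i) for all i. If, in addition, each U_i is strictly Schur concave and (Y_1,…,Y_n) is not comonotone, then the comonotone allocation (Ỹ_i) can be chosen so that moreover U_j(Y_j) < U_j(Ỹ_j) for some j. -/
open MeasureTheory ProbabilityTheory Filter

noncomputable section

variable {Ω : Type*} [MeasurableSpace Ω] (μ : MeasureTheory.Measure Ω) [MeasureTheory.IsProbabilityMeasure μ]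

variable {μ}

section CIHelpers

open MeasureTheory Filter

set_option linter.unusedSectionVars false

variable {Ω : Type*} [MeasurableSpace Ω] {μ : MeasureTheory.Measure Ω}
  [MeasureTheory.IsProbabilityMeasure μ]

namespace CI

/-- slope comparison for concave functions: slopes decrease as interval moves right. -/
lemma concave_slope4 {φ : ℝ → ℝ} (hφ : ConcaveOn ℝ Set.univ φ)
    {a b c d : ℝ} (hab : a < b) (hbc : b ≤ c) (hcd : c < d) :
    (φ d - φ c) / (d - c) ≤ (φ b - φ a) / (b - a) := by
  rcases eq_or_lt_of_le hbc with rfl | hbc'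
  · exact hφ.slope_anti_adjacent trivial trivial hab hcd
  · calc (φ d - φ c) / (d - c) ≤ (φ c - φ b) / (c - b) :=
        hφ.slope_anti_adjacent trivial trivial hbc' hcd
      _ ≤ (φ b - φ a) / (b - a) := hφ.slope_anti_adjacent trivial trivial hab hbc'

lemma concave_incr_slope {φ : ℝ → ℝ} (hφ : ConcaveOn ℝ Set.univ φ)
    {u p q : ℝ} {ε : ℝ} (hε : 0 < ε) (hup : u + ε ≤ p) (hpq : p < q) :
    ε * ((φ q - φ p) / (q - p)) ≤ φ (u + ε) - φ u := by
  have h' : (φ q - φ p) / (q - p) ≤ (φ (u + ε) - φ u) / ε := by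
    have h := concave_slope4 hφ (show u < u + ε by linarith) hup hpq
    simpa using h
  calc ε * ((φ q - φ p) / (q - p)) ≤ ε * ((φ (u + ε) - φ u) / ε) := by
        exact mul_le_mul_of_nonneg_left h' hε.le
    _ = φ (u + ε) - φ u := by field_simp

lemma concave_decr_slope {φ : ℝ → ℝ} (hφ : ConcaveOn ℝ Set.univ φ)
    {v p q : ℝ} {ε : ℝ} (hε : 0 < ε) (hqv : q ≤ v - ε) (hpq : p < q) :
    φ v - φ (v - ε) ≤ ε * ((φ q - φ p) / (q - p)) := by
  have h' : (φ v - φ (v - ε)) / ε ≤ (φ q - φ p) / (q - p) := by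
    have := concave_slope4 hφ hpq hqv (show v - ε < v by linarith)
    simpa using this
  calc φ v - φ (v - ε) = ε * ((φ v - φ (v - ε)) / ε) := by field_simp
    _ ≤ ε * ((φ q - φ p) / (q - p)) := mul_le_mul_of_nonneg_left h' hε.le

lemma concave_continuous {φ : ℝ → ℝ} (hφ : ConcaveOn ℝ Set.univ φ) : Continuous φ := by
  have h : ContinuousOn (-φ) Set.univ := (hφ.neg).continuousOn isOpen_univ
  have : Continuous (-φ) := continuousOn_univ.mp h
  simpa using this.neg

/-- every element of `L^∞` has an a.e. bound. -/
lemma exists_aebound (Z : MeasureTheory.Lp ℝ ⊤ μ) :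
    ∃ C : ℝ, 0 ≤ C ∧ ∀ᵐ ω ∂μ, |Z ω| ≤ C := by
  have h1 : MeasureTheory.eLpNormEssSup (Z : Ω → ℝ) μ < ⊤ := by
    have := MeasureTheory.Lp.eLpNorm_lt_top Z
    rwa [MeasureTheory.eLpNorm_exponent_top] at this
  refine ⟨(MeasureTheory.eLpNormEssSup (Z : Ω → ℝ) μ).toReal, ENNReal.toReal_nonneg, ?_⟩
  filter_upwards [MeasureTheory.ae_le_eLpNormEssSup (f := (Z : Ω → ℝ)) (μ := μ)] with ω hω
  have : (‖Z ω‖₊ : ENNReal).toReal ≤ (MeasureTheory.eLpNormEssSup (Z : Ω → ℝ) μ).toReal :=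
    ENNReal.toReal_mono h1.ne hω
  simpa [Real.norm_eq_abs] using this

lemma integrable_of_aebound {f : Ω → ℝ} (hf : AEStronglyMeasurable f μ) {C : ℝ}
    (hC : ∀ᵐ ω ∂μ, |f ω| ≤ C) : MeasureTheory.Integrable f μ :=
  (MeasureTheory.memLp_top_of_bound hf C (by simpa [Real.norm_eq_abs] using hC)).integrable le_top

/-- composing a continuous function with an a.e. bounded function is integrable. -/
lemma integrable_comp {f : Ω → ℝ} (hf : AEStronglyMeasurable f μ) {C : ℝ}
    (hC : ∀ᵐ ω ∂μ, |f ω| ≤ C) {φ : ℝ → ℝ} (hφ : Continuous φ) :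
    MeasureTheory.Integrable (fun ω => φ (f ω)) μ := by
  obtain ⟨D, hD⟩ := (isCompact_Icc (a := -C) (b := C)).exists_bound_of_continuousOn
    hφ.continuousOn
  refine integrable_of_aebound (hφ.comp_aestronglyMeasurable hf) (C := D) ?_
  filter_upwards [hC] with ω hω
  simpa [Real.norm_eq_abs] using hD (f ω) (abs_le.mp hω)

end CI
end CIHelpers

namespace CI

lemma concaveOrder_refl (Z : Xinf μ) : ConcaveOrder Z Z := fun _ _ => le_refl _

lemma concaveOrder_trans {Z₁ Z₂ Z₃ : Xinf μ} (h₁ : ConcaveOrder Z₁ Z₂)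
    (h₂ : ConcaveOrder Z₂ Z₃) : ConcaveOrder Z₁ Z₃ := fun φ hφ => (h₁ φ hφ).trans (h₂ φ hφ)

lemma concaveOn_neg_id : ConcaveOn ℝ Set.univ (fun x : ℝ => -x) := by
  simpa [Pi.neg_def] using (convexOn_id (convex_univ : Convex ℝ (Set.univ : Set ℝ))).neg

lemma concaveOn_linshift (C : ℝ) : ConcaveOn ℝ Set.univ (fun x : ℝ => C - x) := by
  have := (concaveOn_const (c := C) (convex_univ : Convex ℝ (Set.univ : Set ℝ))).add
    concaveOn_neg_id
  simpa [sub_eq_add_neg, Pi.add_def] using this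

lemma concaveOn_shift (C : ℝ) : ConcaveOn ℝ Set.univ (fun x : ℝ => x + C) := by
  have := (concaveOn_id (convex_univ : Convex ℝ (Set.univ : Set ℝ))).add
    (concaveOn_const (c := C) convex_univ)
  simpa [id, Pi.add_def] using this

lemma concaveOn_min_zero {f : ℝ → ℝ} (hf : ConcaveOn ℝ Set.univ f) :
    ConcaveOn ℝ Set.univ (fun x : ℝ => min (f x) 0) := by
  have := hf.inf (concaveOn_const (c := (0:ℝ)) convex_univ)
  simpa [Pi.inf_def] using this

lemma concaveOrder_mean {Z₁ Z₂ : Xinf μ} (h : ConcaveOrder Z₁ Z₂) :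
    ∫ ω, Z₁ ω ∂μ = ∫ ω, Z₂ ω ∂μ := by
  have h1 := h (fun x => x) (concaveOn_id convex_univ)
  have h2 := h (fun x => -x) concaveOn_neg_id
  simp only [integral_neg] at h2
  linarith

lemma concaveOrder_le_aebound {Z₁ Z₂ : Xinf μ} (h : ConcaveOrder Z₁ Z₂) {C : ℝ}
    (hC : ∀ᵐ ω ∂μ, Z₁ ω ≤ C) : ∀ᵐ ω ∂μ, Z₂ ω ≤ C := by
  obtain ⟨C₂, _, hC₂⟩ := exists_aebound Z₂
  have hconc := concaveOn_min_zero (concaveOn_linshift C)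
  have hcont : Continuous (fun x : ℝ => min (C - x) 0) :=
    (continuous_const.sub continuous_id).min continuous_const
  have hkey := h _ hconc
  have hzero : ∫ ω, min (C - Z₁ ω) 0 ∂μ = 0 := by
    rw [integral_congr_ae (g := fun _ => (0:ℝ))]
    · simp
    · filter_upwards [hC] with ω hω
      simp [min_eq_right, sub_nonneg.mpr hω]
  rw [hzero] at hkey
  have hint : Integrable (fun ω => min (C - Z₂ ω) 0) μ :=
    integrable_comp (Lp.aestronglyMeasurable Z₂) hC₂ hcont
  have hnonpos : ∫ ω, min (C - Z₂ ω) 0 ∂μ ≤ 0 :=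
    integral_nonpos (fun ω => min_le_right _ _)
  have heq : ∫ ω, min (C - Z₂ ω) 0 ∂μ = 0 := le_antisymm hnonpos hkey
  have hae : (fun ω => -min (C - Z₂ ω) 0) =ᵐ[μ] 0 := by
    rw [← integral_eq_zero_iff_of_nonneg]
    · simp [integral_neg, heq]
    · intro ω; simp [min_le_right]
    · exact hint.neg
  filter_upwards [hae] with ω hω
  have hmin : min (C - Z₂ ω) 0 = 0 := by simpa [neg_eq_zero] using hω
  by_contra hcon
  push_neg at hcon
  rw [min_eq_left (by linarith)] at hmin
  linarith

lemma concaveOrder_abs_aebound {Z₁ Z₂ : Xinf μ} (h : ConcaveOrder Z₁ Z₂) {C : ℝ}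
    (hC : ∀ᵐ ω ∂μ, |Z₁ ω| ≤ C) : ∀ᵐ ω ∂μ, |Z₂ ω| ≤ C := by
  have hub : ∀ᵐ ω ∂μ, Z₂ ω ≤ C :=
    concaveOrder_le_aebound h (hC.mono fun ω hω => (abs_le.mp hω).2)
  -- lower bound via the reflected order
  obtain ⟨C₂, _, hC₂⟩ := exists_aebound Z₂
  have hconc := concaveOn_min_zero (concaveOn_shift C)
  have hcont : Continuous (fun x : ℝ => min (x + C) 0) :=
    (continuous_id.add continuous_const).min continuous_const
  have hkey := h _ hconc
  have hzero : ∫ ω, min (Z₁ ω + C) 0 ∂μ = 0 := by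
    rw [integral_congr_ae (g := fun _ => (0:ℝ))]
    · simp
    · filter_upwards [hC] with ω hω
      have h1 := (abs_le.mp hω).1
      have h0 : (0:ℝ) ≤ Z₁ ω + C := by linarith
      simp [min_eq_right h0]
  rw [hzero] at hkey
  have hint : Integrable (fun ω => min (Z₂ ω + C) 0) μ :=
    integrable_comp (Lp.aestronglyMeasurable Z₂) hC₂ hcont
  have hnonpos : ∫ ω, min (Z₂ ω + C) 0 ∂μ ≤ 0 :=
    integral_nonpos (fun ω => min_le_right _ _)
  have heq : ∫ ω, min (Z₂ ω + C) 0 ∂μ = 0 := le_antisymm hnonpos hkey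
  have hae : (fun ω => -min (Z₂ ω + C) 0) =ᵐ[μ] 0 := by
    rw [← integral_eq_zero_iff_of_nonneg]
    · simp [integral_neg, heq]
    · intro ω; simp [min_le_right]
    · exact hint.neg
  filter_upwards [hae, hub] with ω hω hω2
  have hmin : min (Z₂ ω + C) 0 = 0 := by simpa [neg_eq_zero] using hω
  rw [abs_le]
  constructor
  · by_contra hcon
    push_neg at hcon
    rw [min_eq_left (by linarith)] at hmin
    linarith
  · exact hω2

lemma concaveOrder_midpoint {X Z Z' : Xinf μ} (h1 : ConcaveOrder X Z) (h2 : ConcaveOrder X Z') :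
    ConcaveOrder X ((2⁻¹ : ℝ) • (Z + Z')) := by
  intro φ hφ
  obtain ⟨C, hC0, hC⟩ := exists_aebound Z
  obtain ⟨C', hC0', hC'⟩ := exists_aebound Z'
  have hcont := concave_continuous hφ
  have hco : (((2⁻¹ : ℝ) • (Z + Z') : Xinf μ) : Ω → ℝ) =ᵐ[μ]
      fun ω => 2⁻¹ * (Z ω + Z' ω) := by
    filter_upwards [Lp.coeFn_smul (2⁻¹:ℝ) (Z + Z'), Lp.coeFn_add Z Z'] with ω hs ha
    simp only [hs, Pi.smul_apply, ha, Pi.add_apply, smul_eq_mul]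
  have hintZ : Integrable (fun ω => φ (Z ω)) μ :=
    integrable_comp (Lp.aestronglyMeasurable Z) hC hcont
  have hintZ' : Integrable (fun ω => φ (Z' ω)) μ :=
    integrable_comp (Lp.aestronglyMeasurable Z') hC' hcont
  have hintmid : Integrable (fun ω => φ (2⁻¹ * (Z ω + Z' ω))) μ := by
    refine integrable_comp ?_ (C := 2⁻¹ * (C + C')) ?_ hcont
    · exact (((Lp.aestronglyMeasurable Z).add (Lp.aestronglyMeasurable Z')).const_smul
        (2⁻¹:ℝ)).congr (by filter_upwards with ω; simp [smul_eq_mul])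
    · filter_upwards [hC, hC'] with ω h h'
      rw [abs_mul, abs_of_nonneg (by norm_num : (0:ℝ) ≤ 2⁻¹)]
      have := abs_add_le (Z ω) (Z' ω)
      nlinarith
  calc ∫ ω, φ (X ω) ∂μ
      = 2⁻¹ * ∫ ω, φ (X ω) ∂μ + 2⁻¹ * ∫ ω, φ (X ω) ∂μ := by ring
    _ ≤ 2⁻¹ * ∫ ω, φ (Z ω) ∂μ + 2⁻¹ * ∫ ω, φ (Z' ω) ∂μ := by
        have g1 := h1 φ hφ
        have g2 := h2 φ hφ
        nlinarith
    _ = ∫ ω, 2⁻¹ * φ (Z ω) + 2⁻¹ * φ (Z' ω) ∂μ := by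
        rw [integral_add (hintZ.const_mul _) (hintZ'.const_mul _),
          MeasureTheory.integral_const_mul, MeasureTheory.integral_const_mul]
    _ ≤ ∫ ω, φ (2⁻¹ * (Z ω + Z' ω)) ∂μ := by
        refine integral_mono_ae ((hintZ.const_mul _).add (hintZ'.const_mul _)) hintmid ?_
        filter_upwards with ω
        have := hφ.2 (Set.mem_univ (Z ω)) (Set.mem_univ (Z' ω))
          (by norm_num : (0:ℝ) ≤ 2⁻¹) (by norm_num : (0:ℝ) ≤ 2⁻¹) (by norm_num)
        simpa [smul_eq_mul, mul_add] using this
    _ = ∫ ω, φ (((2⁻¹ : ℝ) • (Z + Z')) ω) ∂μ := by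
        refine integral_congr_ae ?_
        filter_upwards [hco] with ω hω
        rw [hω]

end CI

namespace CI

/-- Core perturbation: decrease `f` by `ε₁` on the high set `A`, increase by `ε₂` on the
low set `B`; this improves `f` in concave order, strictly for strictly concave tests. -/
lemma core_perturb {f : Ω → ℝ}
    (hf : AEStronglyMeasurable f μ) {Cf : ℝ} (hCf : ∀ᵐ ω ∂μ, |f ω| ≤ Cf)
    {A B : Set Ω} (hA : MeasurableSet A) (hB : MeasurableSet B) (hAB : Disjoint A B)
    (hA0 : μ A ≠ 0) (hB0 : μ B ≠ 0)
    {p q : ℝ} (hpq : p < q)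
    (hfA : ∀ᵐ ω ∂μ, ω ∈ A → q ≤ f ω) (hfB : ∀ᵐ ω ∂μ, ω ∈ B → f ω ≤ p)
    {ε₁ ε₂ : ℝ} (hε₁ : 0 < ε₁) (hε₂ : 0 < ε₂)
    (hε₁4 : ε₁ ≤ (q - p)/4) (hε₂4 : ε₂ ≤ (q - p)/4)
    (hbal : ε₁ * (μ A).toReal = ε₂ * (μ B).toReal) :
    (∀ φ : ℝ → ℝ, ConcaveOn ℝ Set.univ φ →
      ∫ ω, φ (f ω) ∂μ ≤
        ∫ ω, φ (f ω - A.indicator (fun _ => ε₁) ω + B.indicator (fun _ => ε₂) ω) ∂μ) ∧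
    (∀ φ : ℝ → ℝ, StrictConcaveOn ℝ Set.univ φ →
      ∫ ω, φ (f ω) ∂μ <
        ∫ ω, φ (f ω - A.indicator (fun _ => ε₁) ω + B.indicator (fun _ => ε₂) ω) ∂μ) := by
  set g : Ω → ℝ := fun ω => f ω - A.indicator (fun _ => ε₁) ω + B.indicator (fun _ => ε₂) ω
    with hg
  have hindA : AEStronglyMeasurable (A.indicator (fun _ => ε₁) : Ω → ℝ) μ :=
    ((measurable_const (a := ε₁)).indicator hA).aestronglyMeasurable
  have hindB : AEStronglyMeasurable (B.indicator (fun _ => ε₂) : Ω → ℝ) μ :=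
    ((measurable_const (a := ε₂)).indicator hB).aestronglyMeasurable
  have hgm : AEStronglyMeasurable g μ := (hf.sub hindA).add hindB
  have habsA : ∀ ω, |A.indicator (fun _ => ε₁) ω| ≤ ε₁ := by
    intro ω
    by_cases h : ω ∈ A <;>
      simp [Set.indicator_of_mem, Set.indicator_of_notMem, h, hε₁.le, abs_of_nonneg]
  have habsB : ∀ ω, |B.indicator (fun _ => ε₂) ω| ≤ ε₂ := by
    intro ω
    by_cases h : ω ∈ B <;>
      simp [Set.indicator_of_mem, Set.indicator_of_notMem, h, hε₂.le, abs_of_nonneg]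
  have hgb : ∀ᵐ ω ∂μ, |g ω| ≤ Cf + ε₁ + ε₂ := by
    filter_upwards [hCf] with ω hω
    have h1 := habsA ω; have h2 := habsB ω
    have h3 := abs_le.mp hω; have h4 := abs_le.mp h1; have h5 := abs_le.mp h2
    rw [abs_le]; constructor <;> simp only [hg] <;> [linarith; linarith]
  have hμA : 0 < (μ A).toReal := ENNReal.toReal_pos hA0 (measure_ne_top μ A)
  have hμB : 0 < (μ B).toReal := ENNReal.toReal_pos hB0 (measure_ne_top μ B)
  -- pointwise description of g
  have hgA : ∀ ω ∈ A, g ω = f ω - ε₁ := by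
    intro ω hω
    have hωB : ω ∉ B := Set.disjoint_left.mp hAB hω
    simp [hg, Set.indicator_of_mem hω, Set.indicator_of_notMem hωB]
  have hgB : ∀ ω ∈ B, g ω = f ω + ε₂ := by
    intro ω hω
    have hωA : ω ∉ A := Set.disjoint_right.mp hAB hω
    simp [hg, Set.indicator_of_mem hω, Set.indicator_of_notMem hωA]
  have hgO : ∀ ω, ω ∉ A → ω ∉ B → g ω = f ω := by
    intro ω h1 h2
    simp [hg, Set.indicator_of_notMem h1, Set.indicator_of_notMem h2]
  -- the main estimate, in terms of two slopes
  have main : ∀ φ : ℝ → ℝ, Continuous φ → ∀ σB σA : ℝ,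
      (∀ u : ℝ, u ≤ p → ε₂ * σB ≤ φ (u + ε₂) - φ u) →
      (∀ v : ℝ, q ≤ v → φ v - φ (v - ε₁) ≤ ε₁ * σA) →
      ε₂ * σB * (μ B).toReal - ε₁ * σA * (μ A).toReal ≤
        ∫ ω, φ (g ω) ∂μ - ∫ ω, φ (f ω) ∂μ := by
    intro φ hφc σB σA hB' hA'
    have hintf : Integrable (fun ω => φ (f ω)) μ := integrable_comp hf hCf hφc
    have hintg : Integrable (fun ω => φ (g ω)) μ := integrable_comp hgm hgb hφc
    set dA : Ω → ℝ := fun ω => φ (f ω - ε₁) - φ (f ω) with hdA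
    set dB : Ω → ℝ := fun ω => φ (f ω + ε₂) - φ (f ω) with hdB
    have hintshiftA : Integrable (fun ω => φ (f ω - ε₁)) μ :=
      integrable_comp (hf.sub aestronglyMeasurable_const) (C := Cf + ε₁)
        (by filter_upwards [hCf] with ω hω
            have h3 := abs_le.mp hω
            rw [abs_le]; constructor <;> simp only [Pi.sub_apply] <;> linarith) hφc
    have hintshiftB : Integrable (fun ω => φ (f ω + ε₂)) μ :=
      integrable_comp (hf.add aestronglyMeasurable_const) (C := Cf + ε₂)
        (by filter_upwards [hCf] with ω hω
            have h3 := abs_le.mp hω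
            rw [abs_le]; constructor <;> simp only [Pi.add_apply] <;> linarith) hφc
    have hintdA : Integrable dA μ := hintshiftA.sub hintf
    have hintdB : Integrable dB μ := hintshiftB.sub hintf
    have hsplit : (fun ω => φ (g ω) - φ (f ω)) =
        fun ω => A.indicator dA ω + B.indicator dB ω := by
      funext ω
      by_cases h1 : ω ∈ A
      · have hωB : ω ∉ B := Set.disjoint_left.mp hAB h1
        simp [hgA ω h1, Set.indicator_of_mem h1, Set.indicator_of_notMem hωB, hdA]
      · by_cases h2 : ω ∈ B
        · simp [hgB ω h2, Set.indicator_of_mem h2, Set.indicator_of_notMem h1, hdB]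
        · simp [hgO ω h1 h2, Set.indicator_of_notMem h1, Set.indicator_of_notMem h2]
    have heq : ∫ ω, φ (g ω) ∂μ - ∫ ω, φ (f ω) ∂μ =
        (∫ ω in A, dA ω ∂μ) + ∫ ω in B, dB ω ∂μ := by
      rw [← integral_sub hintg hintf]
      calc ∫ ω, φ (g ω) - φ (f ω) ∂μ
          = ∫ ω, A.indicator dA ω + B.indicator dB ω ∂μ := by rw [hsplit]
        _ = (∫ ω, A.indicator dA ω ∂μ) + ∫ ω, B.indicator dB ω ∂μ :=
            integral_add (hintdA.indicator hA) (hintdB.indicator hB)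
        _ = (∫ ω in A, dA ω ∂μ) + ∫ ω in B, dB ω ∂μ := by
            rw [integral_indicator hA, integral_indicator hB]
    have hboundA : -(ε₁ * σA) * (μ A).toReal ≤ ∫ ω in A, dA ω ∂μ := by
      have hmono : ∫ ω in A, (-(ε₁ * σA)) ∂μ ≤ ∫ ω in A, dA ω ∂μ := by
        refine integral_mono_ae (integrable_const _) (hintdA.integrableOn) ?_
        rw [EventuallyLE, ae_restrict_iff' hA]
        filter_upwards [hfA] with ω hω hωA
        have := hA' (f ω) (hω hωA)
        simp only [hdA]
        linarith
      calc -(ε₁ * σA) * (μ A).toReal = ∫ _ in A, (-(ε₁ * σA)) ∂μ := by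
            rw [setIntegral_const, smul_eq_mul, Measure.real]; ring
        _ ≤ _ := hmono
    have hboundB : ε₂ * σB * (μ B).toReal ≤ ∫ ω in B, dB ω ∂μ := by
      have hmono : ∫ ω in B, (ε₂ * σB) ∂μ ≤ ∫ ω in B, dB ω ∂μ := by
        refine integral_mono_ae (integrable_const _) (hintdB.integrableOn) ?_
        rw [EventuallyLE, ae_restrict_iff' hB]
        filter_upwards [hfB] with ω hω hωB
        have := hB' (f ω) (hω hωB)
        simp only [hdB]
        linarith
      calc ε₂ * σB * (μ B).toReal = ∫ _ in B, (ε₂ * σB) ∂μ := by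
            rw [setIntegral_const, smul_eq_mul, Measure.real]; ring
        _ ≤ _ := hmono
    rw [heq]
    linarith
  set phat := p + (q - p)/4 with hphat
  set mhat := p + (q - p)/2 with hmhat
  set qhat := p + 3*(q - p)/4 with hqhat
  have hpm : phat < mhat := by rw [hphat, hmhat]; linarith
  have hmq : mhat < qhat := by rw [hmhat, hqhat]; linarith
  constructor
  · intro φ hφ
    set σ := (φ qhat - φ phat) / (qhat - phat) with hσ
    have h := main φ (concave_continuous hφ) σ σ
      (fun u hu => concave_incr_slope hφ hε₂ (by rw [hphat]; linarith) (hpm.trans hmq))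
      (fun v hv => concave_decr_slope hφ hε₁ (by rw [hqhat]; linarith) (hpm.trans hmq))
    have hzero : ε₂ * σ * (μ B).toReal - ε₁ * σ * (μ A).toReal = 0 := by
      have hb : ε₂ * (μ B).toReal = ε₁ * (μ A).toReal := hbal.symm
      calc ε₂ * σ * (μ B).toReal - ε₁ * σ * (μ A).toReal
          = σ * (ε₂ * (μ B).toReal) - σ * (ε₁ * (μ A).toReal) := by ring
        _ = 0 := by rw [hb]; ring
    linarith
  · intro φ hφ
    set σ₁ := (φ mhat - φ phat) / (mhat - phat) with hσ₁
    set σ₂ := (φ qhat - φ mhat) / (qhat - mhat) with hσ₂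
    have hσlt : σ₂ < σ₁ := hφ.slope_anti_adjacent trivial trivial hpm hmq
    have h := main φ (concave_continuous hφ.concaveOn) σ₁ σ₂
      (fun u hu => concave_incr_slope hφ.concaveOn hε₂ (by rw [hphat]; linarith) hpm)
      (fun v hv => concave_decr_slope hφ.concaveOn hε₁ (by rw [hqhat]; linarith) hmq)
    have hgain : 0 < ε₂ * σ₁ * (μ B).toReal - ε₁ * σ₂ * (μ A).toReal := by
      have hb : ε₂ * (μ B).toReal = ε₁ * (μ A).toReal := hbal.symm
      have h1 : ε₂ * σ₁ * (μ B).toReal = σ₁ * (ε₁ * (μ A).toReal) := by rw [← hb]; ring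
      have h2 : ε₁ * σ₂ * (μ A).toReal = σ₂ * (ε₁ * (μ A).toReal) := by ring
      rw [h1, h2]
      have : 0 < ε₁ * (μ A).toReal := by positivity
      nlinarith
    linarith

end CI

namespace CI

lemma perturb_lp {n : ℕ} (Y : Fin n → Xinf μ) (i j : Fin n) (hij : i ≠ j)
    {A B : Set Ω} (hA : MeasurableSet A) (hB : MeasurableSet B) (hAB : Disjoint A B)
    (hA0 : μ A ≠ 0) (hB0 : μ B ≠ 0)
    {p q r s' : ℝ} (hpq : p < q) (hrs : r < s')
    (hiA : ∀ᵐ ω ∂μ, ω ∈ A → q ≤ Y i ω) (hiB : ∀ᵐ ω ∂μ, ω ∈ B → Y i ω ≤ p)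
    (hjA : ∀ᵐ ω ∂μ, ω ∈ A → Y j ω ≤ r) (hjB : ∀ᵐ ω ∂μ, ω ∈ B → s' ≤ Y j ω) :
    ∃ Y' : Fin n → Xinf μ, (∑ k, Y' k = ∑ k, Y k) ∧
      (∀ k, ConcaveOrder (Y k) (Y' k)) ∧
      (∀ φ : ℝ → ℝ, StrictConcaveOn ℝ Set.univ φ →
        ∫ ω, φ (Y i ω) ∂μ < ∫ ω, φ (Y' i ω) ∂μ) ∧
      (∀ φ : ℝ → ℝ, StrictConcaveOn ℝ Set.univ φ →
        ∫ ω, φ (Y j ω) ∂μ < ∫ ω, φ (Y' j ω) ∂μ) := by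
  classical
  have hμA : 0 < (μ A).toReal := ENNReal.toReal_pos hA0 (measure_ne_top μ A)
  have hμB : 0 < (μ B).toReal := ENNReal.toReal_pos hB0 (measure_ne_top μ B)
  set a' := (μ A).toReal
  set b' := (μ B).toReal
  set δ := min ((q - p)/4) ((s' - r)/4) with hδdef
  have hδ : 0 < δ := lt_min (by linarith) (by linarith)
  set ε₁ := δ * b' / (a' + b') with hε₁def
  set ε₂ := δ * a' / (a' + b') with hε₂def
  have hε₁ : 0 < ε₁ := by positivity
  have hε₂ : 0 < ε₂ := by positivity
  have hε₁δ : ε₁ ≤ δ := by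
    rw [hε₁def, div_le_iff₀ (by positivity)]
    nlinarith
  have hε₂δ : ε₂ ≤ δ := by
    rw [hε₂def, div_le_iff₀ (by positivity)]
    nlinarith
  have hbal : ε₁ * a' = ε₂ * b' := by
    rw [hε₁def, hε₂def]
    field_simp
  have hδ1 : δ ≤ (q - p)/4 := min_le_left _ _
  have hδ2 : δ ≤ (s' - r)/4 := min_le_right _ _
  obtain ⟨Ci, hCi0, hCi⟩ := exists_aebound (Y i)
  obtain ⟨Cj, hCj0, hCj⟩ := exists_aebound (Y j)
  have core_i := core_perturb (Lp.aestronglyMeasurable (Y i)) hCi hA hB hAB hA0 hB0 hpq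
    hiA hiB hε₁ hε₂ (hε₁δ.trans hδ1) (hε₂δ.trans hδ1) hbal
  have core_j := core_perturb (Lp.aestronglyMeasurable (Y j)) hCj hB hA hAB.symm hB0 hA0 hrs
    hjB hjA hε₂ hε₁ (hε₂δ.trans hδ2) (hε₁δ.trans hδ2) hbal.symm
  set gi : Ω → ℝ :=
    fun ω => Y i ω - A.indicator (fun _ => ε₁) ω + B.indicator (fun _ => ε₂) ω with hgi
  set gj : Ω → ℝ :=
    fun ω => Y j ω - B.indicator (fun _ => ε₂) ω + A.indicator (fun _ => ε₁) ω with hgj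
  have hindA : AEStronglyMeasurable (A.indicator (fun _ => ε₁) : Ω → ℝ) μ :=
    ((measurable_const (a := ε₁)).indicator hA).aestronglyMeasurable
  have hindB : AEStronglyMeasurable (B.indicator (fun _ => ε₂) : Ω → ℝ) μ :=
    ((measurable_const (a := ε₂)).indicator hB).aestronglyMeasurable
  have habsA : ∀ ω, |A.indicator (fun _ => ε₁) ω| ≤ ε₁ := by
    intro ω
    by_cases h : ω ∈ A <;>
      simp [Set.indicator_of_mem, Set.indicator_of_notMem, h, hε₁.le, abs_of_nonneg]
  have habsB : ∀ ω, |B.indicator (fun _ => ε₂) ω| ≤ ε₂ := by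
    intro ω
    by_cases h : ω ∈ B <;>
      simp [Set.indicator_of_mem, Set.indicator_of_notMem, h, hε₂.le, abs_of_nonneg]
  have hmi : MemLp gi ⊤ μ := by
    refine memLp_top_of_bound (((Lp.aestronglyMeasurable (Y i)).sub hindA).add hindB)
      (Ci + ε₁ + ε₂) ?_
    filter_upwards [hCi] with ω hω
    have h1 := habsA ω; have h2 := habsB ω
    have h3 := abs_le.mp hω; have h4 := abs_le.mp h1; have h5 := abs_le.mp h2
    rw [Real.norm_eq_abs, abs_le]
    constructor <;> simp only [hgi] <;> [linarith; linarith]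
  have hmj : MemLp gj ⊤ μ := by
    refine memLp_top_of_bound (((Lp.aestronglyMeasurable (Y j)).sub hindB).add hindA)
      (Cj + ε₁ + ε₂) ?_
    filter_upwards [hCj] with ω hω
    have h1 := habsA ω; have h2 := habsB ω
    have h3 := abs_le.mp hω; have h4 := abs_le.mp h1; have h5 := abs_le.mp h2
    rw [Real.norm_eq_abs, abs_le]
    constructor <;> simp only [hgj] <;> [linarith; linarith]
  set Yi' : Xinf μ := hmi.toLp gi with hYi'def
  set Yj' : Xinf μ := hmj.toLp gj with hYj'def
  have hYi'coe : (Yi' : Ω → ℝ) =ᵐ[μ] gi := hmi.coeFn_toLp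
  have hYj'coe : (Yj' : Ω → ℝ) =ᵐ[μ] gj := hmj.coeFn_toLp
  set Y' : Fin n → Xinf μ := Function.update (Function.update Y i Yi') j Yj' with hY'def
  have hY'i : Y' i = Yi' := by
    rw [hY'def, Function.update_of_ne hij, Function.update_self]
  have hY'j : Y' j = Yj' := by rw [hY'def, Function.update_self]
  have hY'k : ∀ k, k ≠ i → k ≠ j → Y' k = Y k := by
    intro k hki hkj
    rw [hY'def, Function.update_of_ne hkj, Function.update_of_ne hki]
  have hpair : Yi' + Yj' = Y i + Y j := by
    apply Lp.ext
    filter_upwards [Lp.coeFn_add Yi' Yj', Lp.coeFn_add (Y i) (Y j), hYi'coe, hYj'coe]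
      with ω h1 h2 h3 h4
    rw [h1, h2]
    simp only [Pi.add_apply, h3, h4, hgi, hgj]
    ring
  refine ⟨Y', ?_, ?_, ?_, ?_⟩
  · have hjmem : j ∈ (Finset.univ : Finset (Fin n)) := Finset.mem_univ j
    have himem : i ∈ (Finset.univ : Finset (Fin n)) \ {j} := by
      simp [Finset.mem_sdiff, hij]
    calc ∑ k, Y' k
        = ∑ k ∈ (Finset.univ : Finset (Fin n)) \ {j}, Y' k + Y' j :=
          Finset.sum_eq_sum_sdiff_singleton_add hjmem _
      _ = (∑ k ∈ ((Finset.univ : Finset (Fin n)) \ {j}) \ {i}, Y' k + Y' i) + Y' j := by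
          rw [Finset.sum_eq_sum_sdiff_singleton_add himem]
      _ = (∑ k ∈ ((Finset.univ : Finset (Fin n)) \ {j}) \ {i}, Y k + Yi') + Yj' := by
          rw [hY'i, hY'j]
          congr 2
          refine Finset.sum_congr rfl (fun k hk => ?_)
          simp only [Finset.mem_sdiff, Finset.mem_singleton] at hk
          exact hY'k k hk.2 hk.1.2
      _ = (∑ k ∈ ((Finset.univ : Finset (Fin n)) \ {j}) \ {i}, Y k + Y i) + Y j := by
          rw [add_assoc, add_assoc, hpair]
      _ = ∑ k, Y k := by
          rw [← Finset.sum_eq_sum_sdiff_singleton_add himem,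
            ← Finset.sum_eq_sum_sdiff_singleton_add hjmem]
  · intro k
    by_cases hki : k = i
    · subst hki
      rw [hY'i]
      intro φ hφ
      have := core_i.1 φ hφ
      calc ∫ ω, φ (Y k ω) ∂μ ≤ ∫ ω, φ (gi ω) ∂μ := this
        _ = ∫ ω, φ (Yi' ω) ∂μ := integral_congr_ae (by
            filter_upwards [hYi'coe] with ω h; rw [h])
    · by_cases hkj : k = j
      · subst hkj
        rw [hY'j]
        intro φ hφ
        have := core_j.1 φ hφ
        calc ∫ ω, φ (Y k ω) ∂μ ≤ ∫ ω, φ (gj ω) ∂μ := this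
          _ = ∫ ω, φ (Yj' ω) ∂μ := integral_congr_ae (by
              filter_upwards [hYj'coe] with ω h; rw [h])
      · rw [hY'k k hki hkj]
        exact concaveOrder_refl _
  · intro φ hφ
    rw [hY'i]
    have := core_i.2 φ hφ
    calc ∫ ω, φ (Y i ω) ∂μ < ∫ ω, φ (gi ω) ∂μ := this
      _ = ∫ ω, φ (Yi' ω) ∂μ := integral_congr_ae (by
          filter_upwards [hYi'coe] with ω h; rw [h])
  · intro φ hφ
    rw [hY'j]
    have := core_j.2 φ hφ
    calc ∫ ω, φ (Y j ω) ∂μ < ∫ ω, φ (gj ω) ∂μ := this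
      _ = ∫ ω, φ (Yj' ω) ∂μ := integral_congr_ae (by
          filter_upwards [hYj'coe] with ω h; rw [h])

end CI

namespace CI

lemma extract {n : ℕ} (Y : Fin n → Xinf μ) (h : ¬ ComonotoneLp Y) :
    ∃ (i j : Fin n), i ≠ j ∧ ∃ (p q r s' : ℝ), p < q ∧ r < s' ∧
      ∃ (A B : Set Ω), MeasurableSet A ∧ MeasurableSet B ∧ Disjoint A B ∧
        μ A ≠ 0 ∧ μ B ≠ 0 ∧
        (∀ᵐ ω ∂μ, ω ∈ A → q ≤ Y i ω) ∧ (∀ᵐ ω ∂μ, ω ∈ B → Y i ω ≤ p) ∧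
        (∀ᵐ ω ∂μ, ω ∈ A → Y j ω ≤ r) ∧ (∀ᵐ ω ∂μ, ω ∈ B → s' ≤ Y j ω) := by
  classical
  by_contra hcon
  push_neg at hcon
  apply h
  set Z' : Fin n → Ω → ℝ := fun k => (Lp.aestronglyMeasurable (Y k)).mk _ with hZ'
  have hZ'm : ∀ k, Measurable (Z' k) := fun k => (Lp.aestronglyMeasurable (Y k)).measurable_mk
  have hZ'ae : ∀ k, (Y k : Ω → ℝ) =ᵐ[μ] Z' k := fun k => (Lp.aestronglyMeasurable (Y k)).ae_eq_mk
  -- canonical candidate sets, indexed by a countable type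
  set E1 : Fin n × Fin n × ℚ × ℚ × ℚ × ℚ → Set Ω :=
    fun κ => {ω | (κ.2.2.2.1 : ℝ) ≤ Z' κ.1 ω ∧ Z' κ.2.1 ω ≤ (κ.2.2.2.2.1 : ℝ)} with hE1
  set E2 : Fin n × Fin n × ℚ × ℚ × ℚ × ℚ → Set Ω :=
    fun κ => {ω | Z' κ.1 ω ≤ (κ.2.2.1 : ℝ) ∧ ((κ.2.2.2.2.2 : ℚ) : ℝ) ≤ Z' κ.2.1 ω} with hE2
  have hE1m : ∀ κ, MeasurableSet (E1 κ) := by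
    intro κ
    exact (measurableSet_le measurable_const (hZ'm _)).inter
      (measurableSet_le (hZ'm _) measurable_const)
  have hE2m : ∀ κ, MeasurableSet (E2 κ) := by
    intro κ
    exact (measurableSet_le (hZ'm _) measurable_const).inter
      (measurableSet_le measurable_const (hZ'm _))
  set valid : Fin n × Fin n × ℚ × ℚ × ℚ × ℚ → Prop :=
    fun κ => κ.1 ≠ κ.2.1 ∧ κ.2.2.1 < κ.2.2.2.1 ∧ κ.2.2.2.2.1 < κ.2.2.2.2.2 with hvalid
  have key : ∀ κ, valid κ → μ (E1 κ) = 0 ∨ μ (E2 κ) = 0 := by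
    rintro ⟨i, j, pp, qq, rr, ss⟩ ⟨hij, hpq, hrs⟩
    by_contra hk
    push_neg at hk
    have hdisj : Disjoint (E1 (i,j,pp,qq,rr,ss)) (E2 (i,j,pp,qq,rr,ss)) := by
      rw [Set.disjoint_left]
      rintro ω ⟨h1, _⟩ ⟨h2, _⟩
      have : (pp : ℝ) < (qq : ℝ) := by exact_mod_cast hpq
      linarith
    exact hcon i j hij pp qq rr ss (by exact_mod_cast hpq) (by exact_mod_cast hrs)
      (E1 (i,j,pp,qq,rr,ss)) (E2 (i,j,pp,qq,rr,ss)) (hE1m _) (hE2m _) hdisj hk.1 hk.2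
      (by filter_upwards [hZ'ae i] with ω hω hmem; rw [hω]; exact hmem.1)
      (by filter_upwards [hZ'ae i] with ω hω hmem; rw [hω]; exact hmem.1)
      (by filter_upwards [hZ'ae j] with ω hω hmem; rw [hω]; exact hmem.2)
      (by filter_upwards [hZ'ae j] with ω hω hmem; rw [hω] at hmem; exact absurd hmem.1.2 (not_le.mpr hmem.2))
  set Nset : Fin n × Fin n × ℚ × ℚ × ℚ × ℚ → Set Ω :=
    fun κ => if valid κ then (if μ (E1 κ) = 0 then E1 κ else E2 κ) else ∅ with hNset
  have hNnull : ∀ κ, μ (Nset κ) = 0 := by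
    intro κ
    by_cases hv : valid κ
    · by_cases h1 : μ (E1 κ) = 0
      · have he : Nset κ = E1 κ := by simp only [hNset]; rw [if_pos hv, if_pos h1]
        rw [he]; exact h1
      · rcases key κ hv with h0 | h0
        · exact absurd h0 h1
        · have he : Nset κ = E2 κ := by simp only [hNset]; rw [if_pos hv, if_neg h1]
          rw [he]; exact h0
    · have he : Nset κ = ∅ := by simp only [hNset]; rw [if_neg hv]
      simp [he]
  set N : Set Ω := ⋃ κ, Nset κ with hN
  have hNnull' : μ N = 0 := measure_iUnion_null hNnull
  have hNae : ∀ᵐ ω ∂μ, ω ∉ N := by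
    rw [← MeasureTheory.compl_mem_ae_iff] at hNnull'
    exact hNnull'
  have hNc : (Nᶜ : Set Ω).Nonempty := by
    refine nonempty_of_measure_ne_zero (μ := μ) ?_
    intro hc
    have h1 : μ (N ∪ Nᶜ) ≤ μ N + μ Nᶜ := measure_union_le _ _
    rw [Set.union_compl_self, hNnull', hc, measure_univ] at h1
    simp at h1
  obtain ⟨ω₀, hω₀⟩ := hNc
  set pi : Ω → Ω := fun ω => if ω ∈ N then ω₀ else ω with hpi
  have hpiN : ∀ ω, pi ω ∉ N := by
    intro ω
    rw [hpi]
    by_cases hω : ω ∈ N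
    · simpa [hω] using hω₀
    · simpa [hω] using hω
  set Z : Fin n → Ω → ℝ := fun k ω => Z' k (pi ω) with hZ
  have claimGood : ∀ (i j : Fin n) (ω₁ ω₂ : Ω), ω₁ ∉ N → ω₂ ∉ N →
      0 ≤ (Z' i ω₁ - Z' i ω₂) * (Z' j ω₁ - Z' j ω₂) := by
    intro i j ω₁ ω₂ h₁ h₂
    rcases eq_or_ne i j with rfl | hij
    · exact mul_self_nonneg _
    by_contra hneg
    push_neg at hneg
    have hsub : ∀ κ, Nset κ ⊆ N := fun κ => Set.subset_iUnion Nset κ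
    rcases mul_neg_iff.mp hneg with ⟨ha, hb⟩ | ⟨ha, hb⟩
    · -- Z' i ω₁ > Z' i ω₂ and Z' j ω₁ < Z' j ω₂
      have ha' : Z' i ω₂ < Z' i ω₁ := by linarith [sub_pos.mp ha]
      have hb' : Z' j ω₁ < Z' j ω₂ := by linarith [sub_neg.mp hb]
      obtain ⟨pp, hp1, hp2⟩ := exists_rat_btwn ha'
      obtain ⟨qq, hq1, hq2⟩ := exists_rat_btwn hp2
      obtain ⟨rr, hr1, hr2⟩ := exists_rat_btwn hb'
      obtain ⟨ss, hs1, hs2⟩ := exists_rat_btwn hr2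
      set κ : Fin n × Fin n × ℚ × ℚ × ℚ × ℚ := (i, j, pp, qq, rr, ss) with hκ
      have hv : valid κ := ⟨hij, by exact_mod_cast hq1, by exact_mod_cast hs1⟩
      have hω₁E1 : ω₁ ∈ E1 κ := ⟨hq2.le, hr1.le⟩
      have hω₂E2 : ω₂ ∈ E2 κ := ⟨hp1.le, hs2.le⟩
      by_cases h1 : μ (E1 κ) = 0
      · have he : Nset κ = E1 κ := by simp only [hNset]; rw [if_pos hv, if_pos h1]
        exact h₁ (hsub κ (by rw [he]; exact hω₁E1))
      · have he : Nset κ = E2 κ := by simp only [hNset]; rw [if_pos hv, if_neg h1]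
        exact h₂ (hsub κ (by rw [he]; exact hω₂E2))
    · -- symmetric case
      have ha' : Z' i ω₁ < Z' i ω₂ := by linarith [sub_neg.mp ha]
      have hb' : Z' j ω₂ < Z' j ω₁ := by linarith [sub_pos.mp hb]
      obtain ⟨pp, hp1, hp2⟩ := exists_rat_btwn ha'
      obtain ⟨qq, hq1, hq2⟩ := exists_rat_btwn hp2
      obtain ⟨rr, hr1, hr2⟩ := exists_rat_btwn hb'
      obtain ⟨ss, hs1, hs2⟩ := exists_rat_btwn hr2
      set κ : Fin n × Fin n × ℚ × ℚ × ℚ × ℚ := (i, j, pp, qq, rr, ss) with hκ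
      have hv : valid κ := ⟨hij, by exact_mod_cast hq1, by exact_mod_cast hs1⟩
      have hω₂E1 : ω₂ ∈ E1 κ := ⟨hq2.le, hr1.le⟩
      have hω₁E2 : ω₁ ∈ E2 κ := ⟨hp1.le, hs2.le⟩
      by_cases h1 : μ (E1 κ) = 0
      · have he : Nset κ = E1 κ := by simp only [hNset]; rw [if_pos hv, if_pos h1]
        exact h₂ (hsub κ (by rw [he]; exact hω₂E1))
      · have he : Nset κ = E2 κ := by simp only [hNset]; rw [if_pos hv, if_neg h1]
        exact h₁ (hsub κ (by rw [he]; exact hω₁E2))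
  refine ⟨Z, ?_, ?_⟩
  · intro k
    filter_upwards [hZ'ae k, hNae] with ω h1 h2
    rw [h1]
    simp only [hZ, hpi]
    rw [if_neg h2]
  · intro i j ω₁ ω₂
    exact claimGood i j (pi ω₁) (pi ω₂) (hpiN ω₁) (hpiN ω₂)

end CI

namespace CI

/-- the feasible set: allocations of `∑ X` that dominate `X` coordinatewise. -/
def Kset {n : ℕ} (X : Fin n → Xinf μ) : Set (Fin n → Xinf μ) :=
  {Y' | ∑ k, Y' k = ∑ k, X k ∧ ∀ i, ConcaveOrder (X i) (Y' i)}

/-- the second-moment objective. -/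
def Wf (Z : Xinf μ) : ℝ := ∫ ω, (Z ω)^2 ∂μ

def Wsum {n : ℕ} (Y : Fin n → Xinf μ) : ℝ := ∑ i, Wf (Y i)

lemma coeFn_finset_sum {n : ℕ} (s : Finset (Fin n)) (Y : Fin n → Xinf μ) :
    ((∑ k ∈ s, Y k : Xinf μ) : Ω → ℝ) =ᵐ[μ] fun ω => ∑ k ∈ s, Y k ω := by
  classical
  induction s using Finset.induction_on with
  | empty => simp only [Finset.sum_empty]; exact Lp.coeFn_zero ℝ ⊤ μ
  | insert a s hnotmem ih =>
    rw [Finset.sum_insert hnotmem]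
    filter_upwards [Lp.coeFn_add (Y a) (∑ k ∈ s, Y k), ih] with ω h1 h2
    rw [h1]
    simp only [Pi.add_apply, h2, Finset.sum_insert hnotmem]

lemma sq_continuous : Continuous (fun x : ℝ => x^2) := by continuity

lemma Wf_nonneg (Z : Xinf μ) : 0 ≤ Wf Z :=
  integral_nonneg (fun ω => sq_nonneg _)

lemma Wsum_nonneg {n : ℕ} (Y : Fin n → Xinf μ) : 0 ≤ Wsum Y :=
  Finset.sum_nonneg (fun i _ => Wf_nonneg _)

lemma exists_min {n : ℕ} (X : Fin n → Xinf μ) :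
    ∃ Yt : Fin n → Xinf μ, Yt ∈ Kset X ∧ ∀ Y' ∈ Kset X, Wsum Yt ≤ Wsum Y' := by
  classical
  -- coordinatewise bounds
  have hCex : ∀ i, ∃ Ci : ℝ, 0 ≤ Ci ∧ ∀ᵐ ω ∂μ, |X i ω| ≤ Ci := fun i => exists_aebound (X i)
  choose C hC0 hC using hCex
  have hKb : ∀ Y' ∈ Kset X, ∀ i, ∀ᵐ ω ∂μ, |Y' i ω| ≤ C i := by
    intro Y' hY' i
    exact concaveOrder_abs_aebound (hY'.2 i) (hC i)
  have hXK : X ∈ Kset X := ⟨rfl, fun i => concaveOrder_refl _⟩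
  set s := sInf (Wsum '' Kset X) with hs
  have hne : (Wsum '' Kset X).Nonempty := ⟨_, Set.mem_image_of_mem _ hXK⟩
  have hbdd : BddBelow (Wsum '' Kset X) := by
    refine ⟨0, ?_⟩
    rintro w ⟨Y', _, rfl⟩
    exact Wsum_nonneg Y'
  have hslb : ∀ Y' ∈ Kset X, s ≤ Wsum Y' := fun Y' hY' =>
    csInf_le hbdd (Set.mem_image_of_mem _ hY')
  -- near-minimizing sequence
  have hseq : ∀ l : ℕ, ∃ Y', Y' ∈ Kset X ∧ Wsum Y' < s + (1/4) * (1/16 : ℝ)^l := by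
    intro l
    have hpos : (0:ℝ) < (1/4) * (1/16 : ℝ)^l := by positivity
    obtain ⟨w, hw, hw2⟩ := exists_lt_of_csInf_lt hne (lt_add_of_pos_right s hpos)
    obtain ⟨Y', hY', rfl⟩ := hw
    exact ⟨Y', hY', hw2⟩
  choose Ys hmem hval using hseq
  -- integrability of squares
  have hints : ∀ (Y' : Fin n → Xinf μ), Y' ∈ Kset X → ∀ i,
      Integrable (fun ω => (Y' i ω)^2) μ := by
    intro Y' hY' i
    exact integrable_comp (Lp.aestronglyMeasurable (Y' i)) (hKb Y' hY' i) sq_continuous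
  -- parallelogram estimate
  have hpara : ∀ (Ya Yb : Fin n → Xinf μ), Ya ∈ Kset X → Yb ∈ Kset X → ∀ i,
      ∫ ω, (Ya i ω - Yb i ω)^2 ∂μ ≤ 2 * Wsum Ya + 2 * Wsum Yb - 4 * s := by
    intro Ya Yb ha hb i
    set mid : Fin n → Xinf μ := fun k => (2⁻¹ : ℝ) • (Ya k + Yb k) with hmid
    have hmidK : mid ∈ Kset X := by
      constructor
      · have h1 : ∑ k, mid k = (2⁻¹ : ℝ) • (∑ k, Ya k + ∑ k, Yb k) := by
          simp only [hmid]
          rw [← Finset.sum_add_distrib, Finset.smul_sum]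
        rw [h1, ha.1, hb.1, ← two_smul ℝ (∑ k, X k), smul_smul]
        norm_num
      · intro k
        exact concaveOrder_midpoint (ha.2 k) (hb.2 k)
    have hsmid : s ≤ Wsum mid := hslb mid hmidK
    -- coordinatewise parallelogram identity
    have hid : ∀ k, ∫ ω, (Ya k ω - Yb k ω)^2 ∂μ
        = 2 * Wf (Ya k) + 2 * Wf (Yb k) - 4 * Wf (mid k) := by
      intro k
      have hmco : ((mid k : Xinf μ) : Ω → ℝ) =ᵐ[μ] fun ω => 2⁻¹ * (Ya k ω + Yb k ω) := by
        filter_upwards [Lp.coeFn_smul (2⁻¹ : ℝ) (Ya k + Yb k), Lp.coeFn_add (Ya k) (Yb k)]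
          with ω h1 h2
        simp only [hmid]
        rw [h1]
        simp only [Pi.smul_apply, h2, Pi.add_apply, smul_eq_mul]
      have hWmid : Wf (mid k) = ∫ ω, (2⁻¹ * (Ya k ω + Yb k ω))^2 ∂μ := by
        refine integral_congr_ae ?_
        filter_upwards [hmco] with ω h
        rw [h]
      have hia := hints Ya ha k
      have hib := hints Yb hb k
      have hisub : Integrable (fun ω => (Ya k ω - Yb k ω)^2) μ := by
        refine integrable_comp ((Lp.aestronglyMeasurable (Ya k)).sub
          (Lp.aestronglyMeasurable (Yb k))) (C := C k + C k) ?_ sq_continuous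
        filter_upwards [hKb Ya ha k, hKb Yb hb k] with ω h1 h2
        have h3 := abs_le.mp h1; have h4 := abs_le.mp h2
        rw [abs_le]
        constructor <;> simp only [Pi.sub_apply] <;> [linarith; linarith]
      have hiadd : Integrable (fun ω => (Ya k ω + Yb k ω)^2) μ := by
        refine integrable_comp ((Lp.aestronglyMeasurable (Ya k)).add
          (Lp.aestronglyMeasurable (Yb k))) (C := C k + C k) ?_ sq_continuous
        filter_upwards [hKb Ya ha k, hKb Yb hb k] with ω h1 h2
        have h3 := abs_le.mp h1; have h4 := abs_le.mp h2
        rw [abs_le]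
        constructor <;> simp only [Pi.add_apply] <;> [linarith; linarith]
      have key : (∫ ω, (Ya k ω - Yb k ω)^2 ∂μ) + ∫ ω, (Ya k ω + Yb k ω)^2 ∂μ
          = 2 * Wf (Ya k) + 2 * Wf (Yb k) := by
        rw [← integral_add hisub hiadd]
        have hptw : (fun ω => (Ya k ω - Yb k ω)^2 + (Ya k ω + Yb k ω)^2)
            = fun ω => 2 * (Ya k ω)^2 + 2 * (Yb k ω)^2 := by
          funext ω; ring
        rw [hptw, integral_add (hia.const_mul 2) (hib.const_mul 2),
          MeasureTheory.integral_const_mul, MeasureTheory.integral_const_mul]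
        rfl
      have h4 : (∫ ω, (Ya k ω + Yb k ω)^2 ∂μ) = 4 * Wf (mid k) := by
        rw [hWmid, ← MeasureTheory.integral_const_mul]
        refine integral_congr_ae (Filter.Eventually.of_forall fun ω => by ring)
      linarith
    have hsumid : ∑ k, ∫ ω, (Ya k ω - Yb k ω)^2 ∂μ
        = 2 * Wsum Ya + 2 * Wsum Yb - 4 * Wsum mid := by
      rw [Finset.sum_congr rfl (fun k _ => hid k)]
      rw [Finset.sum_sub_distrib, Finset.sum_add_distrib, ← Finset.mul_sum, ← Finset.mul_sum,
        ← Finset.mul_sum]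
      rfl
    have hone : ∫ ω, (Ya i ω - Yb i ω)^2 ∂μ ≤ ∑ k, ∫ ω, (Ya k ω - Yb k ω)^2 ∂μ :=
      Finset.single_le_sum (f := fun k => ∫ ω, (Ya k ω - Yb k ω)^2 ∂μ)
        (fun k _ => integral_nonneg fun ω => sq_nonneg _) (Finset.mem_univ i)
    calc ∫ ω, (Ya i ω - Yb i ω)^2 ∂μ ≤ 2 * Wsum Ya + 2 * Wsum Yb - 4 * Wsum mid := by
          rw [← hsumid]; exact hone
      _ ≤ 2 * Wsum Ya + 2 * Wsum Yb - 4 * s := by linarith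
  -- measurable representatives
  set mk : ℕ → Fin n → Ω → ℝ := fun l i => (Lp.aestronglyMeasurable (Ys l i)).mk _ with hmkdef
  have hmkm : ∀ l i, Measurable (mk l i) :=
    fun l i => (Lp.aestronglyMeasurable (Ys l i)).measurable_mk
  have hmkae : ∀ l i, ((Ys l i : Xinf μ) : Ω → ℝ) =ᵐ[μ] mk l i :=
    fun l i => (Lp.aestronglyMeasurable (Ys l i)).ae_eq_mk
  have hmkb : ∀ l i, ∀ᵐ ω ∂μ, |mk l i ω| ≤ C i := by
    intro l i
    filter_upwards [hmkae l i, hKb (Ys l) (hmem l) i] with ω h1 h2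
    rwa [← h1]
  -- difference bound
  have hd2 : ∀ l i, ∫ ω, (mk l i ω - mk (l+1) i ω)^2 ∂μ ≤ (1/16 : ℝ)^l := by
    intro l i
    have hcongr : ∫ ω, (mk l i ω - mk (l+1) i ω)^2 ∂μ
        = ∫ ω, (Ys l i ω - Ys (l+1) i ω)^2 ∂μ := by
      refine integral_congr_ae ?_
      filter_upwards [hmkae l i, hmkae (l+1) i] with ω h1 h2
      rw [h1, h2]
    rw [hcongr]
    have h1 := hpara (Ys l) (Ys (l+1)) (hmem l) (hmem (l+1)) i
    have h2 := hval l
    have h3 := hval (l+1)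
    have h4 : (0:ℝ) < (1/16 : ℝ)^l := by positivity
    have h5 : ((1/16:ℝ))^(l+1) = (1/16) * (1/16)^l := by ring
    have h6 := hslb (Ys l) (hmem l)
    have h7 := hslb (Ys (l+1)) (hmem (l+1))
    rw [h5] at h3
    linarith
  have hdint : ∀ l i, Integrable (fun ω => (mk l i ω - mk (l+1) i ω)^2) μ := by
    intro l i
    refine integrable_comp (((hmkm l i).sub (hmkm (l+1) i)).aestronglyMeasurable)
      (C := C i + C i) ?_ sq_continuous
    filter_upwards [hmkb l i, hmkb (l+1) i] with ω h1 h2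
    have h3 := abs_le.mp h1; have h4 := abs_le.mp h2
    rw [abs_le]
    constructor <;> first
      | linarith
      | (simp only [Pi.sub_apply]; linarith)
    
  -- Chebyshev sets
  set F : ℕ → Fin n → Set Ω :=
    fun l i => {ω | (2⁻¹ : ℝ)^l ≤ |mk l i ω - mk (l+1) i ω|} with hFdef
  have hFm : ∀ l i, MeasurableSet (F l i) :=
    fun l i => measurableSet_le measurable_const ((hmkm l i).sub (hmkm (l+1) i)).abs
  have hFb : ∀ l i, μ (F l i) ≤ ENNReal.ofReal ((4⁻¹ : ℝ)^l) := by
    intro l i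
    have hql : ((2⁻¹:ℝ)^l)^2 = (4⁻¹ : ℝ)^l := by
      rw [← pow_mul, show (4⁻¹:ℝ) = (2⁻¹)^2 by norm_num, ← pow_mul]
      ring_nf
    have h1 : (μ (F l i)).toReal * (4⁻¹ : ℝ)^l ≤ ∫ ω in F l i,
        (mk l i ω - mk (l+1) i ω)^2 ∂μ := by
      have hmono : ∫ _ in F l i, ((4⁻¹:ℝ)^l) ∂μ ≤ ∫ ω in F l i,
          (mk l i ω - mk (l+1) i ω)^2 ∂μ := by
        refine integral_mono_ae (integrable_const _) ((hdint l i).integrableOn) ?_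
        rw [EventuallyLE, ae_restrict_iff' (hFm l i)]
        refine Filter.Eventually.of_forall fun ω hω => ?_
        have h2 : (2⁻¹ : ℝ)^l ≤ |mk l i ω - mk (l+1) i ω| := hω
        have h3 : ((2⁻¹:ℝ)^l)^2 ≤ |mk l i ω - mk (l+1) i ω|^2 := by
          have h0 : (0:ℝ) ≤ (2⁻¹:ℝ)^l := by positivity
          exact pow_le_pow_left₀ h0 h2 2
        rw [sq_abs] at h3
        rw [← hql]
        exact h3
      rw [setIntegral_const, smul_eq_mul] at hmono
      exact hmono
    have h2 : ∫ ω in F l i, (mk l i ω - mk (l+1) i ω)^2 ∂μ ≤ (1/16 : ℝ)^l :=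
      le_trans (setIntegral_le_integral (hdint l i)
        (Filter.Eventually.of_forall fun ω => sq_nonneg _)) (hd2 l i)
    have h3 : (μ (F l i)).toReal ≤ (4⁻¹ : ℝ)^l := by
      have h4 : (0:ℝ) < (4⁻¹ : ℝ)^l := by positivity
      have h5 : (1/16 : ℝ)^l = (4⁻¹:ℝ)^l * (4⁻¹:ℝ)^l := by
        rw [← mul_pow]; norm_num
      have := le_trans h1 h2
      rw [h5] at this
      exact le_of_mul_le_mul_right this h4
    rw [ENNReal.le_ofReal_iff_toReal_le (measure_ne_top μ _) (by positivity)]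
    exact h3
  set E : ℕ → Set Ω := fun l => ⋃ i, F l i with hEdef
  have hEb : ∀ l, μ (E l) ≤ (n : ENNReal) * ENNReal.ofReal ((4⁻¹ : ℝ)^l) := by
    intro l
    calc μ (E l) ≤ ∑' i : Fin n, μ (F l i) := measure_iUnion_le _
      _ = ∑ i : Fin n, μ (F l i) := tsum_fintype _
      _ ≤ ∑ _i : Fin n, ENNReal.ofReal ((4⁻¹ : ℝ)^l) :=
          Finset.sum_le_sum (fun i _ => hFb l i)
      _ = (n : ENNReal) * ENNReal.ofReal ((4⁻¹ : ℝ)^l) := by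
          rw [Finset.sum_const, Finset.card_univ, Fintype.card_fin, nsmul_eq_mul]
  have htsum : ∑' l, μ (E l) ≠ ⊤ := by
    have h1 : ∑' l, μ (E l) ≤ (n : ENNReal) * ∑' l : ℕ, (ENNReal.ofReal (4⁻¹ : ℝ))^l := by
      rw [← ENNReal.tsum_mul_left]
      refine ENNReal.tsum_le_tsum fun l => ?_
      rw [← ENNReal.ofReal_pow (by norm_num)]
      exact hEb l
    have h2 : ∑' l : ℕ, (ENNReal.ofReal (4⁻¹ : ℝ))^l = (1 - ENNReal.ofReal 4⁻¹)⁻¹ :=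
      ENNReal.tsum_geometric _
    have h3 : (1 - ENNReal.ofReal 4⁻¹) ≠ 0 := by
      intro hc
      rw [tsub_eq_zero_iff_le] at hc
      have : ENNReal.ofReal 4⁻¹ < 1 := ENNReal.ofReal_lt_one.mpr (by norm_num)
      exact absurd (lt_of_lt_of_le this hc) (lt_irrefl _)
    intro hc
    rw [hc] at h1
    have h4 : (n : ENNReal) * ∑' l : ℕ, (ENNReal.ofReal (4⁻¹ : ℝ))^l < ⊤ := by
      rw [h2]
      refine ENNReal.mul_lt_top (ENNReal.natCast_lt_top n) ?_
      rw [lt_top_iff_ne_top]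
      exact ENNReal.inv_ne_top.mpr h3
    exact absurd (lt_of_le_of_lt h1 h4) (lt_irrefl _)
  have hBC : μ (Filter.limsup E Filter.atTop) = 0 :=
    MeasureTheory.measure_limsup_atTop_eq_zero htsum
  have hBC' : ∀ᵐ ω ∂μ, ω ∉ Filter.limsup E Filter.atTop := by
    rw [← MeasureTheory.compl_mem_ae_iff] at hBC
    exact hBC
  -- a.e. convergence
  have hconv : ∀ᵐ ω ∂μ, ∀ i, ∃ x : ℝ, Tendsto (fun l => mk l i ω) atTop (nhds x) := by
    filter_upwards [hBC'] with ω hω i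
    rw [Filter.mem_limsup_iff_frequently_mem, Filter.not_frequently] at hω
    obtain ⟨L, hL⟩ := Filter.eventually_atTop.mp hω
    have hsmall : ∀ l, L ≤ l → |mk l i ω - mk (l+1) i ω| < (2⁻¹ : ℝ)^l := by
      intro l hl
      by_contra hcon
      push_neg at hcon
      exact (hL l hl) (Set.mem_iUnion.mpr ⟨i, hcon⟩)
    have hcs : CauchySeq (fun l => mk (l + L) i ω) := by
      refine cauchySeq_of_le_geometric 2⁻¹ ((2⁻¹:ℝ)^L) (by norm_num) fun l => ?_
      have e : l + 1 + L = l + L + 1 := by omega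
      rw [e, Real.dist_eq]
      have := (hsmall (l + L) (le_add_self)).le
      calc |mk (l + L) i ω - mk (l + L + 1) i ω| ≤ (2⁻¹:ℝ)^(l+L) := this
        _ = (2⁻¹:ℝ)^L * (2⁻¹:ℝ)^l := by rw [pow_add]; ring
    obtain ⟨x, hx⟩ := cauchySeq_tendsto_of_complete hcs
    exact ⟨x, (tendsto_add_atTop_iff_nat L).mp hx⟩
  set V : Fin n → Ω → ℝ := fun i ω => limUnder atTop (fun l => mk l i ω) with hVdef
  have htend : ∀ᵐ ω ∂μ, ∀ i, Tendsto (fun l => mk l i ω) atTop (nhds (V i ω)) := by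
    filter_upwards [hconv] with ω hω i
    obtain ⟨x, hx⟩ := hω i
    have : V i ω = x := hx.limUnder_eq
    rw [this]
    exact hx
  have hVm : ∀ i, AEStronglyMeasurable (V i) μ := by
    intro i
    exact aestronglyMeasurable_of_tendsto_ae atTop
      (fun l => (hmkm l i).aestronglyMeasurable) (htend.mono fun ω h => h i)
  have hVb : ∀ i, ∀ᵐ ω ∂μ, |V i ω| ≤ C i := by
    intro i
    have hb : ∀ᵐ ω ∂μ, ∀ l, |mk l i ω| ≤ C i := ae_all_iff.mpr (fun l => hmkb l i)
    filter_upwards [hb, htend] with ω h1 h2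
    exact le_of_tendsto (h2 i).abs (Filter.Eventually.of_forall fun l => h1 l)
  have hVmem : ∀ i, MemLp (V i) ⊤ μ := fun i =>
    memLp_top_of_bound (hVm i) (C i) (by simpa [Real.norm_eq_abs] using hVb i)
  set Yt : Fin n → Xinf μ := fun i => (hVmem i).toLp (V i) with hYtdef
  have hYtco : ∀ i, ((Yt i : Xinf μ) : Ω → ℝ) =ᵐ[μ] V i := fun i => (hVmem i).coeFn_toLp
  -- sums are preserved along the sequence
  have hsum_l : ∀ l, ∀ᵐ ω ∂μ, ∑ i, mk l i ω = ((∑ k, X k : Xinf μ) : Ω → ℝ) ω := by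
    intro l
    have hae : ∀ᵐ ω ∂μ, ∀ i, Ys l i ω = mk l i ω := ae_all_iff.mpr (fun i => hmkae l i)
    filter_upwards [coeFn_finset_sum Finset.univ (Ys l), hae] with ω h1 h2
    have h3 : ∑ i, mk l i ω = ∑ i, Ys l i ω := by
      refine Finset.sum_congr rfl fun i _ => (h2 i).symm
    rw [h3, ← h1, (hmem l).1]
  have hsumYt : ∑ k, Yt k = ∑ k, X k := by
    apply Lp.ext
    have h1 : ((∑ k, Yt k : Xinf μ) : Ω → ℝ) =ᵐ[μ] fun ω => ∑ i, V i ω := by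
      have hae : ∀ᵐ ω ∂μ, ∀ i, Yt i ω = V i ω := ae_all_iff.mpr (fun i => hYtco i)
      filter_upwards [coeFn_finset_sum Finset.univ Yt, hae] with ω h1 h2
      rw [h1]
      exact Finset.sum_congr rfl fun i _ => h2 i
    have h2 : ∀ᵐ ω ∂μ, ∀ l, ∑ i, mk l i ω = ((∑ k, X k : Xinf μ) : Ω → ℝ) ω :=
      ae_all_iff.mpr hsum_l
    refine h1.trans ?_
    filter_upwards [h2, htend] with ω hc ht
    have hs1 : Tendsto (fun l => ∑ i, mk l i ω) atTop (nhds (∑ i, V i ω)) :=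
      tendsto_finset_sum _ (fun i _ => ht i)
    have hs2 : Tendsto (fun l => ∑ i, mk l i ω) atTop
        (nhds (((∑ k, X k : Xinf μ) : Ω → ℝ) ω)) := by
      refine Tendsto.congr (fun l => (hc l).symm) tendsto_const_nhds
    exact tendsto_nhds_unique hs1 hs2
  -- concave order is preserved in the limit
  have horder : ∀ i, ConcaveOrder (X i) (Yt i) := by
    intro i φ hφ
    have hcont := concave_continuous hφ
    obtain ⟨D, hD⟩ := (isCompact_Icc (a := -(C i)) (b := C i)).exists_bound_of_continuousOn
      hcont.continuousOn
    have h1 : Tendsto (fun l => ∫ ω, φ (mk l i ω) ∂μ) atTop (nhds (∫ ω, φ (V i ω) ∂μ)) := by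
      refine tendsto_integral_of_dominated_convergence (fun _ => D)
        (fun l => hcont.comp_aestronglyMeasurable (hmkm l i).aestronglyMeasurable)
        (integrable_const D) (fun l => ?_) ?_
      · filter_upwards [hmkb l i] with ω hω
        exact hD _ (by rw [Set.mem_Icc]; exact abs_le.mp hω)
      · filter_upwards [htend] with ω hω
        exact ((hcont.tendsto (V i ω)).comp (hω i))
    have h2 : ∀ l, ∫ ω, φ (X i ω) ∂μ ≤ ∫ ω, φ (mk l i ω) ∂μ := by
      intro l
      have := (hmem l).2 i φ hφ
      calc ∫ ω, φ (X i ω) ∂μ ≤ ∫ ω, φ (Ys l i ω) ∂μ := this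
        _ = ∫ ω, φ (mk l i ω) ∂μ := integral_congr_ae (by
            filter_upwards [hmkae l i] with ω h; rw [h])
    have h3 : ∫ ω, φ (X i ω) ∂μ ≤ ∫ ω, φ (V i ω) ∂μ :=
      ge_of_tendsto h1 (Filter.Eventually.of_forall h2)
    calc ∫ ω, φ (X i ω) ∂μ ≤ ∫ ω, φ (V i ω) ∂μ := h3
      _ = ∫ ω, φ (Yt i ω) ∂μ := integral_congr_ae (by
          filter_upwards [hYtco i] with ω h; rw [h])
  -- the objective converges
  have hWlim : Tendsto (fun l => Wsum (Ys l)) atTop (nhds (Wsum Yt)) := by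
    refine tendsto_finset_sum _ (fun i _ => ?_)
    have h1 : ∀ l, Wf (Ys l i) = ∫ ω, (mk l i ω)^2 ∂μ := by
      intro l
      refine integral_congr_ae ?_
      filter_upwards [hmkae l i] with ω h
      rw [h]
    have h2 : Wf (Yt i) = ∫ ω, (V i ω)^2 ∂μ := by
      refine integral_congr_ae ?_
      filter_upwards [hYtco i] with ω h
      rw [h]
    rw [h2]
    simp only [h1]
    refine tendsto_integral_of_dominated_convergence (fun _ => (C i)^2)
      (fun l => sq_continuous.comp_aestronglyMeasurable (hmkm l i).aestronglyMeasurable)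
      (integrable_const _) (fun l => ?_) ?_
    · filter_upwards [hmkb l i] with ω hω
      rw [Real.norm_eq_abs, abs_pow]
      exact pow_le_pow_left₀ (abs_nonneg _) hω 2
    · filter_upwards [htend] with ω hω
      exact (sq_continuous.tendsto (V i ω)).comp (hω i)
  have hWle : Wsum Yt ≤ s := by
    have h1 : Tendsto (fun l : ℕ => s + (1/4) * (1/16:ℝ)^l) atTop (nhds (s + (1/4) * 0)) :=
      (tendsto_const_nhds.add ((tendsto_pow_atTop_nhds_zero_of_lt_one (by norm_num)
        (by norm_num)).const_mul _))
    rw [mul_zero, add_zero] at h1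
    exact le_of_tendsto_of_tendsto' hWlim h1 (fun l => (hval l).le)
  exact ⟨Yt, ⟨hsumYt, horder⟩, fun Y' hY' => le_trans hWle (hslb Y' hY')⟩

end CI

namespace CI

lemma strictConcave_negsq : StrictConcaveOn ℝ Set.univ (fun x : ℝ => -(x^2)) := by
  have h := (Even.strictConvexOn_pow (even_two) (two_ne_zero)).neg
  simpa [Pi.neg_def] using h

lemma exists_comonotone_improvement {n : ℕ} (X : Fin n → Xinf μ) :
    ∃ Yt : Fin n → Xinf μ, ∑ k, Yt k = ∑ k, X k ∧ ComonotoneLp Yt ∧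
      ∀ i, ConcaveOrder (X i) (Yt i) := by
  obtain ⟨Yt, hYtK, hmin⟩ := exists_min X
  refine ⟨Yt, hYtK.1, ?_, hYtK.2⟩
  by_contra hnc
  obtain ⟨i, j, hij, p, q, r, s', hpq, hrs, A, B, hA, hB, hAB, hA0, hB0, hiA, hiB, hjA, hjB⟩ :=
    extract Yt hnc
  obtain ⟨Y', hsum, horder, hstri, hstrj⟩ :=
    perturb_lp Yt i j hij hA hB hAB hA0 hB0 hpq hrs hiA hiB hjA hjB
  have hY'K : Y' ∈ Kset X := ⟨hsum.trans hYtK.1, fun k =>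
    concaveOrder_trans (hYtK.2 k) (horder k)⟩
  have hWi : Wf (Y' i) < Wf (Yt i) := by
    have h1 := hstri _ strictConcave_negsq
    rw [integral_neg, integral_neg] at h1
    simp only [Wf]
    linarith
  have hWle : ∀ k, Wf (Y' k) ≤ Wf (Yt k) := by
    intro k
    have h1 := horder k _ strictConcave_negsq.concaveOn
    rw [integral_neg, integral_neg] at h1
    simp only [Wf]
    linarith
  have hlt : Wsum Y' < Wsum Yt :=
    Finset.sum_lt_sum (fun k _ => hWle k) ⟨i, Finset.mem_univ i, hWi⟩
  have := hmin Y' hY'K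
  linarith

end CI


/-- Comonotone improvement. If each `U i` is Schur concave, every allocation of
`S` can be improved by a comonotone allocation; if moreover each `U i` is strictly Schur
concave and the allocation is not comonotone, the improvement can be made strict for some
agent. -/
theorem comonotone_improvement
    (hatomless : AtomlessMeasure μ) {n : ℕ} (hn : 0 < n)
    (U : Fin n → Xinf μ → ℝ) (S : Xinf μ)
    (hSchur : ∀ i, SchurConcave (U i)) :
    (∀ Y : Fin n → Xinf μ, ∑ i, Y i = S →
      ∃ Yt : Fin n → Xinf μ, ∑ i, Yt i = S ∧ ComonotoneLp Yt ∧
        ∀ i, U i (Y i) ≤ U i (Yt i)) ∧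
    ((∀ i, StrictSchurConcave (U i)) →
      ∀ Y : Fin n → Xinf μ, ∑ i, Y i = S → ¬ ComonotoneLp Y →
        ∃ Yt : Fin n → Xinf μ, ∑ i, Yt i = S ∧ ComonotoneLp Yt ∧
          (∀ i, U i (Y i) ≤ U i (Yt i)) ∧ ∃ j, U j (Y j) < U j (Yt j)) := by
  constructor
  · intro Y hY
    obtain ⟨Yt, hsum, hcom, hord⟩ := CI.exists_comonotone_improvement Y
    exact ⟨Yt, by rw [hsum, hY], hcom, fun i => hSchur i _ _ (hord i)⟩
  · intro hstrict Y hY hnc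
    obtain ⟨i, j, hij, p, q, r, s', hpq, hrs, A, B, hA, hB, hAB, hA0, hB0, hiA, hiB, hjA, hjB⟩ :=
      CI.extract Y hnc
    obtain ⟨Y', hsum', horder', hstri, hstrj⟩ :=
      CI.perturb_lp Y i j hij hA hB hAB hA0 hB0 hpq hrs hiA hiB hjA hjB
    obtain ⟨Yt, hsum, hcom, hord⟩ := CI.exists_comonotone_improvement Y'
    refine ⟨Yt, by rw [hsum, hsum', hY], hcom,
      fun k => hSchur k _ _ (CI.concaveOrder_trans (horder' k) (hord k)), i, ?_⟩
    refine hstrict i _ _ ⟨CI.concaveOrder_trans (horder' i) (hord i), fun φ hφ => ?_⟩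
    exact lt_of_lt_of_le (hstri φ hφ) (hord i φ hφ.concaveOn)


end
end

section
/- If U_i is translation invariant for all i, then the set of Pareto-optimal allocations equals the set 𝒮_𝟏 of maximizers of the unweighted sum ∑_{i=1}^n U_i(Y_i) over IR allocations; that is, 𝒫𝒪 = 𝒮_𝟏. -/
open MeasureTheory ProbabilityTheory Filter

noncomputable section

variable {Ω : Type*} [MeasurableSpace Ω] (μ : MeasureTheory.Measure Ω) [MeasureTheory.IsProbabilityMeasure μ]

variable {μ}

/-- If each `U i` is translation invariant, the Pareto-optimal allocations are
exactly the maximizers of the unweighted sum of utilities over IR allocations. -/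
theorem PO_eq_sum_maximizers
    (hatomless : AtomlessMeasure μ) {n : ℕ} (hn : 0 < n)
    (U : Fin n → Xinf μ → ℝ) (X : Fin n → Xinf μ)
    (htrans : ∀ i, TranslationInvariant (U i)) :
    POset U X = {Y | Y ∈ IRset U X ∧ ∀ Y' ∈ IRset U X,
      ∑ i, U i (Y' i) ≤ ∑ i, U i (Y i)} := by
  ext Y
  constructor
  · rintro ⟨hIR, hPO⟩
    refine ⟨hIR, fun Y' hY' => ?_⟩
    by_contra hlt
    push_neg at hlt
    -- redistribute via constants
    set ε : Fin n → ℝ := fun i => U i (Y' i) - U i (Y i) with hε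
    have hsum : 0 < ∑ i, ε i := by
      have : ∑ i, ε i = ∑ i, U i (Y' i) - ∑ i, U i (Y i) := by
        simp [hε, Finset.sum_sub_distrib]
      linarith
    set δ : ℝ := (∑ i, ε i) / n with hδ
    have hδpos : 0 < δ := div_pos hsum (by exact_mod_cast hn)
    set c : Fin n → ℝ := fun i => δ - ε i with hc
    have hcsum : ∑ i, c i = 0 := by
      have : ∑ _i : Fin n, δ = ∑ i, ε i := by
        simp [hδ]
        field_simp
      simp [hc, Finset.sum_sub_distrib, this]
    set Y'' : Fin n → Xinf μ := fun i => Y' i + Lp.const ⊤ μ (c i) with hY''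
    have hUY'' : ∀ i, U i (Y'' i) = U i (Y i) + δ := by
      intro i
      have := htrans i (Y' i) (c i)
      simp only [hY'']
      rw [this]
      simp [hc, hε]
      ring
    have hY''alloc : Y'' ∈ Alloc X := by
      have : ∑ i, Y'' i = ∑ i, Y' i + ∑ i, Lp.const ⊤ μ (c i) := by
        simp [hY'', Finset.sum_add_distrib]
      have h2 : ∑ i, (Lp.const ⊤ μ (c i) : Xinf μ) = Lp.const ⊤ μ (∑ i, c i) :=
        (map_sum (Lp.const ⊤ μ) c Finset.univ).symm
      have h3 : (Lp.const ⊤ μ (∑ i, c i) : Xinf μ) = 0 := by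
        rw [hcsum]; exact map_zero _
      simp only [Alloc, Set.mem_setOf_eq] at hY' ⊢
      rw [this, h2, h3, add_zero]
      exact hY'.1
    have hY''IR : Y'' ∈ IRset U X := by
      refine ⟨hY''alloc, fun i => ?_⟩
      rw [hUY'' i]
      have := hIR.2 i
      linarith
    exact hPO ⟨Y'', hY''IR, fun i => by rw [hUY'' i]; linarith,
      ⟨0, hn⟩, by rw [hUY'' ⟨0, hn⟩]; linarith⟩
  · rintro ⟨hIR, hmax⟩
    refine ⟨hIR, ?_⟩
    rintro ⟨Y', hY'IR, hle, j, hj⟩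
    have h1 : ∑ i, U i (Y i) < ∑ i, U i (Y' i) :=
      Finset.sum_lt_sum (fun i _ => hle i) ⟨j, Finset.mem_univ j, hj⟩
    exact absurd (hmax Y' hY'IR) (not_le.mpr h1)

end
end

section
/- If U_i is translation invariant for all i, then the set of comonotone Pareto-optimal allocations equals the set 𝒞𝒮_𝟏 of maximizers of the unweighted sum ∑_{i=1}^n U_i(Y_i) over IR comonotone allocations; that is, 𝒞𝒫𝒪 = 𝒞𝒮_𝟏. -/
open MeasureTheory ProbabilityTheory Filter

noncomputable section

variable {Ω : Type*} [MeasurableSpace Ω] (μ : MeasureTheory.Measure Ω) [MeasureTheory.IsProbabilityMeasure μ]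

variable {μ}

/-- If each `U i` is translation invariant, the comonotone Pareto-optimal
allocations are exactly the maximizers of the unweighted sum of utilities over IR comonotone
allocations. -/
theorem CPO_eq_sum_maximizers
    (hatomless : AtomlessMeasure μ) {n : ℕ} (hn : 0 < n)
    (U : Fin n → Xinf μ → ℝ) (X : Fin n → Xinf μ)
    (htrans : ∀ i, TranslationInvariant (U i)) :
    CPOset U X = {Y | Y ∈ IRset U X ∧ ComonotoneLp Y ∧ ∀ Y' ∈ IRset U X, ComonotoneLp Y' →
      ∑ i, U i (Y' i) ≤ ∑ i, U i (Y i)} := by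
  ext Y
  constructor
  · rintro ⟨hIR, hcom, hno⟩
    refine ⟨hIR, hcom, ?_⟩
    intro Y' hIR' hcom'
    by_contra hlt
    push_neg at hlt
    -- build a Pareto improvement by transferring constants
    set ε : ℝ := (∑ i, (U i (Y' i) - U i (Y i))) / n with hε
    have hsumpos : 0 < ∑ i, (U i (Y' i) - U i (Y i)) := by
      rw [Finset.sum_sub_distrib]; linarith
    have hεpos : 0 < ε := div_pos hsumpos (by exact_mod_cast hn)
    set c : Fin n → ℝ := fun i => U i (Y i) - U i (Y' i) + ε with hc
    have hcsum : ∑ i, c i = 0 := by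
      have h1 : ∑ i, c i = (∑ i, (U i (Y i) - U i (Y' i))) + n * ε := by
        simp only [hc]
        rw [Finset.sum_add_distrib, Finset.sum_const, Finset.card_univ, Fintype.card_fin,
          nsmul_eq_mul]
      rw [h1, hε, mul_div_cancel₀ _ (by exact_mod_cast hn.ne' : (n:ℝ) ≠ 0),
        Finset.sum_sub_distrib, Finset.sum_sub_distrib]
      ring
    set Y'' : Fin n → Xinf μ := fun i => Y' i + Lp.const ⊤ μ (c i) with hY''
    have hU'' : ∀ i, U i (Y'' i) = U i (Y i) + ε := by
      intro i
      rw [hY'', htrans i (Y' i) (c i), hc]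
      ring
    have halloc : Y'' ∈ Alloc X := by
      have : ∑ i, Y'' i = ∑ i, Y' i + ∑ i, Lp.const ⊤ μ (c i) := by
        simp [hY'', Finset.sum_add_distrib]
      have h0 : ∑ i, Lp.const ⊤ μ (c i) = (0 : Xinf μ) := by
        rw [← map_sum (Lp.const ⊤ μ) c Finset.univ, hcsum, map_zero]
      rw [Alloc, Set.mem_setOf_eq, this, h0, add_zero]
      exact hIR'.1
    have hIR'' : Y'' ∈ IRset U X := by
      refine ⟨halloc, fun i => ?_⟩
      rw [hU'' i]
      have := hIR.2 i
      linarith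
    have hcom'' : ComonotoneLp Y'' := by
      obtain ⟨Z, hZae, hZcom⟩ := hcom'
      refine ⟨fun i ω => Z i ω + c i, fun i => ?_, fun i j ω₁ ω₂ => ?_⟩
      · filter_upwards [Lp.coeFn_add (Y' i) (Lp.const ⊤ μ (c i)), Lp.coeFn_const ⊤ μ (c i),
          hZae i] with ω h1 h2 h3
        simp only [hY'', h1, Pi.add_apply, h2, h3, Function.const]
      · have := hZcom i j ω₁ ω₂
        simpa using this
    exact hno ⟨Y'', hIR'', hcom'', fun i => by rw [hU'' i]; linarith,
      ⟨0, hn⟩, by rw [hU'' ⟨0, hn⟩]; linarith⟩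
  · rintro ⟨hIR, hcom, hmax⟩
    refine ⟨hIR, hcom, ?_⟩
    rintro ⟨Y', hIR', hcom', hle, j, hj⟩
    have := hmax Y' hIR' hcom'
    have : ∑ i, U i (Y' i) > ∑ i, U i (Y i) :=
      Finset.sum_lt_sum (fun i _ => hle i) ⟨j, Finset.mem_univ j, hj⟩
    linarith


end
end
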